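/- arXiv:2509.08413 — 7 statements merged into one kernel-verified Lean document; each statement's English description precedes it below -/
import Mathlib

section
/- Accuracy-optimization lemma (two-weight case): Let d_0, d_1 > 0 with d_0 + d_1 = 1, let C > 0, p ≥ 1, and let τ, β_0, β_1 be positive functions of h with τ(h) = O(h^m), β_k(h) = a·h^{n1} + b_k·h^{n2} + O(h^{n2+1}) for k = 0,1, where a > 0, n2 > n1 ≥ 1, and m > n1. Define α_k = d_k·(1 + C·(τ/β_k)^p) and ω_k = α_k/(α_0 + α_1). Then ω_k = d_k·(1 + O(h^{p(m−n1)} · h^{n2−n1})) as h → 0⁺; that is, ω_k − d_k = O(h^{p(m−n1)+n2−n1})·d_k. -/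
/-!
Write `x_k = (τ/β_k)^p`. Since `d₀ + d₁ = 1`, the weight error is
`ω₀ - d₀ = C d₀ d₁ (x₀ - x₁) / S` with `S ≥ 1`, so everything reduces to bounding `x₀ - x₁`.
Because `β₀` and `β₁` share the leading term `a h^n₁`, both are at least `(a/2) h^n₁` near `0`
while `β₀ - β₁ = O(h^n₂)`. Hence `τ/β_k = O(h^(m-n₁))` and
`τ/β₀ - τ/β₁ = τ (β₁ - β₀) / (β₀ β₁) = O(h^(m-n₁) h^(n₂-n₁))`, and the mean value theorem for
`t ↦ t^p` gives `x₀ - x₁ = O(h^((m-n₁)(p-1)) · h^(m-n₁) h^(n₂-n₁))`.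
-/

open Asymptotics Filter Set Topology

theorem abs_rpow_sub_rpow_le {p M u v : ℝ} (hp : 1 ≤ p) (hu : u ∈ Icc 0 M) (hv : v ∈ Icc 0 M) :
    |u ^ p - v ^ p| ≤ p * M ^ (p - 1) * |u - v| := by
  have hderiv : ∀ x ∈ Icc 0 M, HasDerivWithinAt (· ^ p) (p * x ^ (p - 1)) (Icc 0 M) x :=
    fun x _ => (Real.hasDerivAt_rpow_const (Or.inr hp)).hasDerivWithinAt
  have hbound : ∀ x ∈ Icc 0 M, ‖p * x ^ (p - 1)‖ ≤ p * M ^ (p - 1) := fun x hx => by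
    rw [Real.norm_eq_abs, abs_of_nonneg (mul_nonneg (by linarith) (Real.rpow_nonneg hx.1 _))]
    exact mul_le_mul_of_nonneg_left (Real.rpow_le_rpow hx.1 hx.2 (by linarith)) (by linarith)
  simpa only [Real.norm_eq_abs] using
    (convex_Icc 0 M).norm_image_sub_le_of_norm_hasDerivWithin_le hderiv hbound hv hu

section Asymptotics

variable {α : Type*} {l : Filter α}

theorem isBigO_rpow_sub_rpow {p : ℝ} (hp : 1 ≤ p) {u v g δ : α → ℝ}
    (hu : 0 ≤ᶠ[l] u) (hv : 0 ≤ᶠ[l] v) (hg : 0 ≤ᶠ[l] g)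
    (hug : u =O[l] g) (hvg : v =O[l] g) (huv : (fun x => u x - v x) =O[l] δ) :
    (fun x => u x ^ p - v x ^ p) =O[l] fun x => g x ^ (p - 1) * δ x := by
  have hmean : (fun x => u x ^ p - v x ^ p) =O[l]
      fun x => (u x + v x) ^ (p - 1) * (u x - v x) := by
    refine .of_bound p ?_
    filter_upwards [hu, hv] with x hux hvx
    have hsum : 0 ≤ u x + v x := add_nonneg hux hvx
    rw [Real.norm_eq_abs, Real.norm_eq_abs, abs_mul, abs_of_nonneg (Real.rpow_nonneg hsum _),
      ← mul_assoc]
    exact abs_rpow_sub_rpow_le hp ⟨hux, le_add_of_nonneg_right hvx⟩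
      ⟨hvx, le_add_of_nonneg_left hux⟩
  exact hmean.trans (((hug.add hvg).rpow (by linarith) hg).mul huv)

theorem isBigO_inv_of_le_mul {β g : α → ℝ} {c : ℝ} (hc : 0 < c) (hg : ∀ᶠ x in l, 0 < g x)
    (hβ : ∀ᶠ x in l, c * g x ≤ β x) : (fun x => (β x)⁻¹) =O[l] fun x => (g x)⁻¹ := by
  refine .of_bound c⁻¹ ?_
  filter_upwards [hg, hβ] with x hgx hβx
  have hβpos : 0 < β x := lt_of_lt_of_le (by positivity) hβx
  rw [Real.norm_eq_abs, Real.norm_eq_abs, abs_of_pos (inv_pos.2 hβpos),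
    abs_of_pos (inv_pos.2 hgx), ← mul_inv]
  exact inv_anti₀ (by positivity) hβx

theorem isBigO_div_sub_div {τ β₀ β₁ gτ gβ gδ : α → ℝ} (hτ : τ =O[l] gτ)
    (hβ₀ : (fun x => (β₀ x)⁻¹) =O[l] gβ) (hβ₁ : (fun x => (β₁ x)⁻¹) =O[l] gβ)
    (hδ : (fun x => β₀ x - β₁ x) =O[l] gδ) (hne₀ : ∀ᶠ x in l, β₀ x ≠ 0)
    (hne₁ : ∀ᶠ x in l, β₁ x ≠ 0) :
    (fun x => τ x / β₀ x - τ x / β₁ x) =O[l] fun x => gτ x * gδ x * gβ x * gβ x := by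
  refine ((((hτ.mul hδ).mul hβ₀).mul hβ₁).neg_left).congr' ?_ .rfl
  filter_upwards [hne₀, hne₁] with x h₀ h₁
  field_simp
  ring

theorem eventually_half_mul_le {β g : α → ℝ} {a : ℝ} (ha : 0 < a)
    (hg : ∀ᶠ x in l, 0 ≤ g x) (hβ : (fun x => β x - a * g x) =o[l] g) :
    ∀ᶠ x in l, a / 2 * g x ≤ β x := by
  filter_upwards [hg, hβ.def (half_pos ha)] with x hgx hx
  rw [Real.norm_eq_abs, Real.norm_eq_abs, abs_of_nonneg hgx] at hx
  linarith [neg_abs_le (β x - a * g x)]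

end Asymptotics

theorem eventually_nhdsGT_zero_iff {P : ℝ → Prop} :
    (∀ᶠ x in 𝓝[>] 0, P x) ↔ ∃ ε > 0, ∀ x ∈ Ioo 0 ε, P x :=
  mem_nhdsGT_iff_exists_Ioo_subset

theorem isBigO_nhdsGT_zero_of_bound {f g : ℝ → ℝ}
    (h : ∃ K > 0, ∃ ε > 0, ∀ x ∈ Ioo 0 ε, |f x| ≤ K * g x) : f =O[𝓝[>] 0] g := by
  obtain ⟨K, hK, hbound⟩ := h
  refine .of_bound K (eventually_nhdsGT_zero_iff.2 ?_)
  obtain ⟨ε, hε, hbound⟩ := hbound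
  exact ⟨ε, hε, fun x hx => (hbound x hx).trans (by gcongr; exact le_abs_self _)⟩

theorem isBigO_pow_succ_nhdsGT_zero (n : ℕ) :
    (fun h : ℝ => h ^ (n + 1)) =O[𝓝[>] 0] fun h => h ^ n :=
  (isLittleO_pow_pow n.lt_succ_self).isBigO.mono nhdsWithin_le_nhds

section Expansion

variable {β β₀ β₁ : ℝ → ℝ} {a b b₀ b₁ : ℝ} {n₁ n₂ : ℕ}

theorem isLittleO_sub_leading_term (hn : n₁ < n₂)
    (hβ : (fun h => β h - (a * h ^ n₁ + b * h ^ n₂)) =O[𝓝[>] 0] fun h => h ^ (n₂ + 1)) :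
    (fun h => β h - a * h ^ n₁) =o[𝓝[>] 0] fun h => h ^ n₁ := by
  have hrem : (fun h : ℝ => h ^ (n₂ + 1)) =o[𝓝[>] 0] fun h => h ^ n₁ :=
    (isLittleO_pow_pow (by omega)).mono nhdsWithin_le_nhds
  have hb : (fun h : ℝ => b * h ^ n₂) =o[𝓝[>] 0] fun h => h ^ n₁ :=
    ((isLittleO_pow_pow hn).mono nhdsWithin_le_nhds).const_mul_left b
  refine (hβ.trans_isLittleO hrem |>.add hb).congr_left fun h => ?_
  ring

theorem isBigO_sub_of_common_leading_term
    (hβ₀ : (fun h => β₀ h - (a * h ^ n₁ + b₀ * h ^ n₂)) =O[𝓝[>] 0] fun h => h ^ (n₂ + 1))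
    (hβ₁ : (fun h => β₁ h - (a * h ^ n₁ + b₁ * h ^ n₂)) =O[𝓝[>] 0] fun h => h ^ (n₂ + 1)) :
    (fun h => β₀ h - β₁ h) =O[𝓝[>] 0] fun h => h ^ n₂ := by
  have hb : (fun h : ℝ => (b₀ - b₁) * h ^ n₂) =O[𝓝[>] 0] fun h => h ^ n₂ :=
    (isBigO_refl _ _).const_mul_left _
  refine ((hβ₀.sub hβ₁).trans (isBigO_pow_succ_nhdsGT_zero n₂) |>.add hb).congr_left fun h => ?_
  ring

end Expansion

theorem isBigO_rpow_div_sub_rpow_div {τ β₀ β₁ : ℝ → ℝ} {p a b₀ b₁ : ℝ} {m n₁ n₂ : ℕ}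
    (hp : 1 ≤ p) (ha : 0 < a) (hn : n₁ < n₂)
    (hτ : τ =O[𝓝[>] 0] fun h => h ^ m) (hτ_nonneg : ∀ᶠ h in 𝓝[>] 0, 0 ≤ τ h)
    (hβ₀ : (fun h => β₀ h - (a * h ^ n₁ + b₀ * h ^ n₂)) =O[𝓝[>] 0] fun h => h ^ (n₂ + 1))
    (hβ₁ : (fun h => β₁ h - (a * h ^ n₁ + b₁ * h ^ n₂)) =O[𝓝[>] 0] fun h => h ^ (n₂ + 1)) :
    (fun h => (τ h / β₀ h) ^ p - (τ h / β₁ h) ^ p) =O[𝓝[>] 0]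
      fun h => h ^ (p * ((m : ℝ) - n₁) + ((n₂ : ℝ) - n₁)) := by
  have hpos : ∀ᶠ h in 𝓝[>] (0 : ℝ), 0 < h := self_mem_nhdsWithin
  have hpow : ∀ᶠ h in 𝓝[>] (0 : ℝ), 0 < h ^ n₁ := hpos.mono fun h hh => pow_pos hh n₁
  have hlow₀ := eventually_half_mul_le ha (hpow.mono fun _ => le_of_lt)
    (isLittleO_sub_leading_term hn hβ₀)
  have hlow₁ := eventually_half_mul_le ha (hpow.mono fun _ => le_of_lt)
    (isLittleO_sub_leading_term hn hβ₁)
  have hβpos₀ : ∀ᶠ h in 𝓝[>] 0, 0 < β₀ h := by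
    filter_upwards [hpow, hlow₀] with h h₁ h₂ using lt_of_lt_of_le (by positivity) h₂
  have hβpos₁ : ∀ᶠ h in 𝓝[>] 0, 0 < β₁ h := by
    filter_upwards [hpow, hlow₁] with h h₁ h₂ using lt_of_lt_of_le (by positivity) h₂
  have hinv₀ := isBigO_inv_of_le_mul (half_pos ha) hpow hlow₀
  have hinv₁ := isBigO_inv_of_le_mul (half_pos ha) hpow hlow₁
  have hratio₀ : (fun h => τ h / β₀ h) =O[𝓝[>] 0] fun h => h ^ m * (h ^ n₁)⁻¹ := by
    simpa only [div_eq_mul_inv] using hτ.mul hinv₀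
  have hratio₁ : (fun h => τ h / β₁ h) =O[𝓝[>] 0] fun h => h ^ m * (h ^ n₁)⁻¹ := by
    simpa only [div_eq_mul_inv] using hτ.mul hinv₁
  have hdiff := isBigO_div_sub_div hτ hinv₀ hinv₁ (isBigO_sub_of_common_leading_term hβ₀ hβ₁)
    (hβpos₀.mono fun _ => ne_of_gt) (hβpos₁.mono fun _ => ne_of_gt)
  have hnonneg₀ : ∀ᶠ h in 𝓝[>] 0, 0 ≤ τ h / β₀ h := by
    filter_upwards [hτ_nonneg, hβpos₀] with h h₁ h₂ using div_nonneg h₁ h₂.le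
  have hnonneg₁ : ∀ᶠ h in 𝓝[>] 0, 0 ≤ τ h / β₁ h := by
    filter_upwards [hτ_nonneg, hβpos₁] with h h₁ h₂ using div_nonneg h₁ h₂.le
  have hscale : ∀ᶠ h in 𝓝[>] (0 : ℝ), 0 ≤ h ^ m * (h ^ n₁)⁻¹ := by
    filter_upwards [hpos] with h hh using by positivity
  refine (isBigO_rpow_sub_rpow hp hnonneg₀ hnonneg₁ hscale hratio₀ hratio₁ hdiff).congr' .rfl ?_
  filter_upwards [hpos] with h hh
  simp only [← Real.rpow_natCast, ← Real.rpow_neg hh.le, ← Real.rpow_add hh,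
    ← Real.rpow_mul hh.le]
  congr 1
  ring

theorem abs_normalized_weight_sub_le {d₀ d₁ C x₀ x₁ e : ℝ} (hd₀ : 0 ≤ d₀) (hd₁ : 0 ≤ d₁)
    (hsum : d₀ + d₁ = 1) (hC : 0 ≤ C) (hx₀ : 0 ≤ x₀) (hx₁ : 0 ≤ x₁) (hx : |x₀ - x₁| ≤ e) :
    |d₀ * (1 + C * x₀) / (d₀ * (1 + C * x₀) + d₁ * (1 + C * x₁)) - d₀| ≤ C * e * d₀ := by
  set S := d₀ * (1 + C * x₀) + d₁ * (1 + C * x₁)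
  have hS : 1 ≤ S := by
    nlinarith [mul_nonneg (mul_nonneg hC hd₀) hx₀, mul_nonneg (mul_nonneg hC hd₁) hx₁]
  have hSpos : 0 < S := by linarith
  have he : 0 ≤ e := (abs_nonneg _).trans hx
  have hnum : d₀ * (1 + C * x₀) - S * d₀ = C * d₁ * (x₀ - x₁) * d₀ := by
    linear_combination (-(d₀ * (1 + C * x₀))) * hsum
  rw [div_sub' hSpos.ne', abs_div, abs_of_pos hSpos, div_le_iff₀ hSpos]
  calc |d₀ * (1 + C * x₀) - S * d₀| = C * d₁ * |x₀ - x₁| * d₀ := by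
        rw [hnum, abs_mul, abs_mul, abs_mul, abs_of_nonneg hC, abs_of_nonneg hd₀,
          abs_of_nonneg hd₁]
    _ ≤ C * 1 * e * d₀ := by gcongr; linarith
    _ ≤ C * e * d₀ * S := by rw [mul_one]; exact le_mul_of_one_le_right (by positivity) hS

theorem weno_accuracy_optimization_general
    (d0 d1 C p a b0 b1 : ℝ) (m n1 n2 : ℕ)
    (τ β0 β1 : ℝ → ℝ)
    (hd0 : 0 < d0) (hd1 : 0 < d1) (hsum : d0 + d1 = 1)
    (hC : 0 < C) (hp : 1 ≤ p) (ha : 0 < a)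
    (hn12 : n1 < n2)
    (hpos : ∃ ε > 0, ∀ h ∈ Set.Ioo (0:ℝ) ε, 0 < τ h ∧ 0 < β0 h ∧ 0 < β1 h)
    (hτ : ∃ K > 0, ∃ ε > 0, ∀ h ∈ Set.Ioo (0:ℝ) ε, |τ h| ≤ K * h ^ m)
    (hβ0 : ∃ K > 0, ∃ ε > 0, ∀ h ∈ Set.Ioo (0:ℝ) ε,
      |β0 h - (a * h ^ n1 + b0 * h ^ n2)| ≤ K * h ^ (n2 + 1))
    (hβ1 : ∃ K > 0, ∃ ε > 0, ∀ h ∈ Set.Ioo (0:ℝ) ε,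
      |β1 h - (a * h ^ n1 + b1 * h ^ n2)| ≤ K * h ^ (n2 + 1)) :
    ∃ K > 0, ∃ ε > 0, ∀ h ∈ Set.Ioo (0:ℝ) ε,
      |d0 * (1 + C * (τ h / β0 h) ^ p) /
          (d0 * (1 + C * (τ h / β0 h) ^ p) + d1 * (1 + C * (τ h / β1 h) ^ p)) - d0|
        ≤ K * h ^ (p * ((m : ℝ) - (n1 : ℝ)) + ((n2 : ℝ) - (n1 : ℝ))) * d0 ∧
      |d1 * (1 + C * (τ h / β1 h) ^ p) /
          (d0 * (1 + C * (τ h / β0 h) ^ p) + d1 * (1 + C * (τ h / β1 h) ^ p)) - d1|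
        ≤ K * h ^ (p * ((m : ℝ) - (n1 : ℝ)) + ((n2 : ℝ) - (n1 : ℝ))) * d1 := by
  have hpos' := eventually_nhdsGT_zero_iff.2 hpos
  obtain ⟨c, hc, hO⟩ := (isBigO_rpow_div_sub_rpow_div hp ha hn12 (isBigO_nhdsGT_zero_of_bound hτ)
    (hpos'.mono fun _ h => h.1.le) (isBigO_nhdsGT_zero_of_bound hβ0)
    (isBigO_nhdsGT_zero_of_bound hβ1)).exists_pos
  refine ⟨C * c, by positivity, eventually_nhdsGT_zero_iff.1 ?_⟩
  filter_upwards [hO.bound, hpos', self_mem_nhdsWithin] with h hbound ⟨hτh, hβ0h, hβ1h⟩ hh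
  rw [Real.norm_eq_abs, Real.norm_eq_abs, abs_of_pos (Real.rpow_pos_of_pos hh _)] at hbound
  have hx0 : 0 ≤ (τ h / β0 h) ^ p := by positivity
  have hx1 : 0 ≤ (τ h / β1 h) ^ p := by positivity
  refine ⟨?_, ?_⟩
  · simpa only [mul_assoc] using
      abs_normalized_weight_sub_le hd0.le hd1.le hsum hC.le hx0 hx1 hbound
  · rw [add_comm (d0 * _)]
    simpa only [mul_assoc] using abs_normalized_weight_sub_le hd1.le hd0.le
      (by rw [add_comm, hsum]) hC.le hx1 hx0 ((abs_sub_comm _ _).trans_le hbound)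

/-- Accuracy-optimization lemma (Lemma 3.1, two-weight case): when both local
smoothness indicators share the same leading expansion term and the constant `C`
is common, the normalized weights gain `h^(n2-n1)` extra accuracy. -/
theorem weno_accuracy_optimization
    (d0 d1 C p a b0 b1 : ℝ) (m n1 n2 : ℕ)
    (τ β0 β1 : ℝ → ℝ)
    (hd0 : 0 < d0) (hd1 : 0 < d1) (hsum : d0 + d1 = 1)
    (hC : 0 < C) (hp : 1 ≤ p) (ha : 0 < a)
    (hn1 : 1 ≤ n1) (hn12 : n1 < n2) (hm : n1 < m)
    (hpos : ∃ ε > 0, ∀ h ∈ Set.Ioo (0:ℝ) ε, 0 < τ h ∧ 0 < β0 h ∧ 0 < β1 h)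
    (hτ : ∃ K > 0, ∃ ε > 0, ∀ h ∈ Set.Ioo (0:ℝ) ε, |τ h| ≤ K * h ^ m)
    (hβ0 : ∃ K > 0, ∃ ε > 0, ∀ h ∈ Set.Ioo (0:ℝ) ε,
      |β0 h - (a * h ^ n1 + b0 * h ^ n2)| ≤ K * h ^ (n2 + 1))
    (hβ1 : ∃ K > 0, ∃ ε > 0, ∀ h ∈ Set.Ioo (0:ℝ) ε,
      |β1 h - (a * h ^ n1 + b1 * h ^ n2)| ≤ K * h ^ (n2 + 1)) :
    ∃ K > 0, ∃ ε > 0, ∀ h ∈ Set.Ioo (0:ℝ) ε,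
      |d0 * (1 + C * (τ h / β0 h) ^ p) /
          (d0 * (1 + C * (τ h / β0 h) ^ p) + d1 * (1 + C * (τ h / β1 h) ^ p)) - d0|
        ≤ K * h ^ (p * ((m : ℝ) - (n1 : ℝ)) + ((n2 : ℝ) - (n1 : ℝ))) * d0 ∧
      |d1 * (1 + C * (τ h / β1 h) ^ p) /
          (d0 * (1 + C * (τ h / β0 h) ^ p) + d1 * (1 + C * (τ h / β1 h) ^ p)) - d1|
        ≤ K * h ^ (p * ((m : ℝ) - (n1 : ℝ)) + ((n2 : ℝ) - (n1 : ℝ))) * d1 :=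
  weno_accuracy_optimization_general d0 d1 C p a b0 b1 m n1 n2 τ β0 β1 hd0 hd1 hsum hC hp ha hn12
    hpos hτ hβ0 hβ1
end

section
/- Resolution monotonicity in the smoothness-indicator coefficient C_β (Lemma 3.2): Let τ > 0 and let u_C, u_D, v_C, v_D be positive reals with u_D > u_C, v_D > v_C, and u_D²/u_C² > v_D²/v_C². For x ≥ 0 define y(x) = (1 + τ/(u_D² + x·v_D²)) / (1 + τ/(u_C² + x·v_C²)). Then y is strictly increasing on (0, ∞); in particular if C_1 > C_2 > 0 then y(C_1) > y(C_2). -/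
/-!
Write `β_K(x) = u_K² + x v_K²`. The ratio hypothesis says that
`v_C² β_D(x) - v_D² β_C(x) = u_D² v_C² - u_C² v_D²` is a positive constant.
Hence `β_D / β_C` decreases in `x`, and, since also `β_C ≤ β_D`, the reciprocal `1 / β_D`
decreases more slowly than `1 / β_C`. For `a < b` these are the product and sum inequalities
between the reciprocals `1 / β_K(a)`, `1 / β_K(b)` which force `(1 + τ / β_D) / (1 + τ / β_C)`
to be larger at `b`.
-/

open Set

theorem one_add_mul_div_lt_one_add_mul_div {τ p q r s : ℝ} (hτ : 0 < τ) (hp : 0 ≤ p)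
    (hq : 0 ≤ q) (hsum : r + q < p + s) (hprod : r * q ≤ p * s) :
    (1 + τ * r) / (1 + τ * p) < (1 + τ * s) / (1 + τ * q) := by
  rw [div_lt_div_iff₀ (by positivity) (by positivity)]
  nlinarith [mul_lt_mul_of_pos_left hsum hτ, mul_le_mul_of_nonneg_left hprod (sq_nonneg τ)]

section AffineIndicator

variable {aC bC aD bD : ℝ}

theorem affine_mul_lt_affine_mul (hcross : aC * bD < aD * bC) (x : ℝ) :
    (aC + x * bC) * bD < (aD + x * bD) * bC := by
  linear_combination hcross

theorem affine_le_affine (haC : 0 < aC) (hbC : 0 < bC) (hb : bC ≤ bD)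
    (hcross : aC * bD < aD * bC) {x : ℝ} (hx : 0 ≤ x) :
    aC + x * bC ≤ aD + x * bD := by
  have ha : aC ≤ aD := by nlinarith
  nlinarith

theorem affine_mul_affine_le (hcross : aC * bD < aD * bC) {a b : ℝ} (hab : a ≤ b) :
    (aC + a * bC) * (aD + b * bD) ≤ (aD + a * bD) * (aC + b * bC) := by
  nlinarith [mul_nonneg (sub_nonneg.2 hab) (sub_pos.2 hcross).le]

theorem strictMonoOn_one_add_div_affine_div {τ : ℝ} (hτ : 0 < τ) (haC : 0 < aC)
    (hbC : 0 < bC) (hb : bC ≤ bD) (hcross : aC * bD < aD * bC) :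
    StrictMonoOn (fun x => (1 + τ / (aD + x * bD)) / (1 + τ / (aC + x * bC))) (Ici 0) := by
  intro a (ha : 0 ≤ a) b (hb0 : 0 ≤ b) hab
  have hβD : ∀ x, 0 ≤ x → 0 < aD + x * bD := fun x hx =>
    (by positivity : 0 < aC + x * bC).trans_le (affine_le_affine haC hbC hb hcross hx)
  have hCa : 0 < aC + a * bC := by positivity
  have hCb : 0 < aC + b * bC := by positivity
  have hDa := hβD a ha
  have hDb := hβD b hb0
  simp only [div_eq_mul_inv τ]
  refine one_add_mul_div_lt_one_add_mul_div hτ (by positivity) (by positivity) ?_ ?_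
  · suffices (aD + a * bD)⁻¹ - (aD + b * bD)⁻¹ < (aC + a * bC)⁻¹ - (aC + b * bC)⁻¹ by
      linarith
    rw [inv_sub_inv hDa.ne' hDb.ne', inv_sub_inv hCa.ne' hCb.ne',
      div_lt_div_iff₀ (by positivity) (by positivity)]
    calc (aD + b * bD - (aD + a * bD)) * ((aC + a * bC) * (aC + b * bC))
        = (b - a) * ((aC + a * bC) * bD) * (aC + b * bC) := by ring
      _ < (b - a) * ((aD + a * bD) * bC) * (aC + b * bC) :=
        mul_lt_mul_of_pos_right
          (mul_lt_mul_of_pos_left (affine_mul_lt_affine_mul hcross a) (sub_pos.2 hab)) hCb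
      _ ≤ (b - a) * ((aD + a * bD) * bC) * (aD + b * bD) :=
        mul_le_mul_of_nonneg_left (affine_le_affine haC hbC hb hcross hb0)
          (mul_pos (sub_pos.2 hab) (mul_pos hDa hbC)).le
      _ = (aC + b * bC - (aC + a * bC)) * ((aD + a * bD) * (aD + b * bD)) := by ring
  · rw [← mul_inv, ← mul_inv]
    exact inv_anti₀ (by positivity) (affine_mul_affine_le hcross hab.le)

end AffineIndicator

theorem resolution_monotone_in_Cbeta_general
    (τ uC uD vC vD : ℝ) (hτ : 0 < τ)
    (huC : 0 < uC) (hvC : 0 < vC) (hv : vC < vD)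
    (hratio : vD ^ 2 / vC ^ 2 < uD ^ 2 / uC ^ 2) :
    StrictMonoOn
      (fun x : ℝ =>
        (1 + τ / (uD ^ 2 + x * vD ^ 2)) / (1 + τ / (uC ^ 2 + x * vC ^ 2)))
      (Set.Ioi 0) ∧
    ∀ C1 C2 : ℝ, 0 < C2 → C2 < C1 →
      (1 + τ / (uD ^ 2 + C2 * vD ^ 2)) / (1 + τ / (uC ^ 2 + C2 * vC ^ 2))
        < (1 + τ / (uD ^ 2 + C1 * vD ^ 2)) / (1 + τ / (uC ^ 2 + C1 * vC ^ 2)) := by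
  have hcross : uC ^ 2 * vD ^ 2 < uD ^ 2 * vC ^ 2 := by
    rwa [div_lt_div_iff₀ (by positivity) (by positivity), mul_comm (vD ^ 2)] at hratio
  have hmono := (strictMonoOn_one_add_div_affine_div hτ (by positivity) (by positivity)
    (pow_le_pow_left₀ hvC.le hv.le 2) hcross).mono Ioi_subset_Ici_self
  exact ⟨hmono, fun C1 C2 h2 h12 => hmono h2 (h2.trans h12) h12⟩

/-- Resolution monotonicity in the smoothness-indicator coefficient `C_β`
(Lemma 3.2): the weight ratio `y` is strictly increasing on `(0, ∞)`. -/
theorem resolution_monotone_in_Cbeta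
    (τ uC uD vC vD : ℝ) (hτ : 0 < τ)
    (huC : 0 < uC) (hvC : 0 < vC) (hu : uC < uD) (hv : vC < vD)
    (hratio : vD ^ 2 / vC ^ 2 < uD ^ 2 / uC ^ 2) :
    StrictMonoOn
      (fun x : ℝ =>
        (1 + τ / (uD ^ 2 + x * vD ^ 2)) / (1 + τ / (uC ^ 2 + x * vC ^ 2)))
      (Set.Ioi 0) ∧
    ∀ C1 C2 : ℝ, 0 < C2 → C2 < C1 →
      (1 + τ / (uD ^ 2 + C2 * vD ^ 2)) / (1 + τ / (uC ^ 2 + C2 * vC ^ 2))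
        < (1 + τ / (uD ^ 2 + C1 * vD ^ 2)) / (1 + τ / (uC ^ 2 + C1 * vC ^ 2)) :=
  resolution_monotone_in_Cbeta_general τ uC uD vC vD hτ huC hvC hv hratio
end

section
/- Uniqueness of the fourth-order quadratic global indicator (Lemma 2.1(1)): Let τ(f) = Σ_{i,j∈{−1,0,1}} a_{ij} f(x+i·h)·f(x+j·h) be a quadratic form in the three values f(x−h), f(x), f(x+h) with a symmetric coefficient matrix [a_{ij}] independent of h. Suppose that for every smooth function f with f′(x) ≠ 0, τ(f) = O(h⁴) as h → 0. Then there exists a constant c such that τ(f) = c·(f(x−h) − 2f(x) + f(x+h))² for all f. -/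
open Filter Topology

private lemma step_zero (q0 q1 q2 q3 q4 C ε : ℝ) (hε : 0 < ε) (k : ℕ) (hk : 1 ≤ k)
    (hb : ∀ h : ℝ, 0 < h → h < ε →
      |q0 + q1*h + q2*h^2 + q3*h^3 + q4*h^4| ≤ C * h ^ k) : q0 = 0 := by
  have hc : Continuous (fun h : ℝ => q0 + q1*h + q2*h^2 + q3*h^3 + q4*h^4) := by
    continuity
  have h1 : Tendsto (fun h : ℝ => q0 + q1*h + q2*h^2 + q3*h^3 + q4*h^4)
      (𝓝[>] (0:ℝ)) (𝓝 (q0 + q1*0 + q2*0^2 + q3*0^3 + q4*0^4)) :=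
    (hc.tendsto 0).mono_left nhdsWithin_le_nhds
  have hev : ∀ᶠ h in 𝓝[>] (0:ℝ),
      ‖q0 + q1*h + q2*h^2 + q3*h^3 + q4*h^4‖ ≤ C * h ^ k := by
    filter_upwards [Ioo_mem_nhdsGT_of_mem (Set.mem_Ico.mpr ⟨le_refl 0, hε⟩)] with h hh
    exact hb h hh.1 hh.2
  have h3 : Tendsto (fun h : ℝ => C * h ^ k) (𝓝 0) (𝓝 (C * 0 ^ k)) :=
    (continuous_const.mul (continuous_pow k)).tendsto 0
  rw [zero_pow (by omega), mul_zero] at h3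
  have h2 := squeeze_zero_norm' hev (h3.mono_left nhdsWithin_le_nhds)
  have := tendsto_nhds_unique h1 h2
  linarith

private lemma coeff_zero (p0 p1 p2 p3 p4 C ε : ℝ) (hε : 0 < ε)
    (hb : ∀ h : ℝ, 0 < h → h < ε →
      |p0 + p1*h + p2*h^2 + p3*h^3 + p4*h^4| ≤ C * h ^ 4) :
    p0 = 0 ∧ p1 = 0 ∧ p2 = 0 ∧ p3 = 0 := by
  have shift : ∀ (r1 r2 r3 r4 : ℝ) (k : ℕ),
      (∀ h : ℝ, 0 < h → h < ε → |0 + r1*h + r2*h^2 + r3*h^3 + r4*h^4| ≤ C * h ^ (k+1)) →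
      (∀ h : ℝ, 0 < h → h < ε → |r1 + r2*h + r3*h^2 + r4*h^3 + 0*h^4| ≤ C * h ^ k) := by
    intro r1 r2 r3 r4 k H h hp hl
    have H1 := H h hp hl
    have key : |r1 + r2*h + r3*h^2 + r4*h^3 + 0*h^4| * h ≤ C * h ^ k * h := by
      calc |r1 + r2*h + r3*h^2 + r4*h^3 + 0*h^4| * h
          = |(r1 + r2*h + r3*h^2 + r4*h^3 + 0*h^4) * h| := by
            rw [abs_mul, abs_of_pos hp]
        _ = |0 + r1*h + r2*h^2 + r3*h^3 + r4*h^4| := by rw [show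
              (r1 + r2*h + r3*h^2 + r4*h^3 + 0*h^4) * h
                = 0 + r1*h + r2*h^2 + r3*h^3 + r4*h^4 by ring]
        _ ≤ C * h ^ (k+1) := H1
        _ = C * h ^ k * h := by ring
    exact le_of_mul_le_mul_right key hp
  have h0 : p0 = 0 := step_zero _ p1 p2 p3 p4 C ε hε 4 (by norm_num) hb
  rw [h0] at hb
  have hb1 := shift p1 p2 p3 p4 3 hb
  have h1 : p1 = 0 := step_zero _ p2 p3 p4 0 C ε hε 3 (by norm_num) hb1
  rw [h1] at hb1
  have hb2 := shift p2 p3 p4 0 2 hb1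
  have h2 : p2 = 0 := step_zero _ p3 p4 0 0 C ε hε 2 (by norm_num) hb2
  rw [h2] at hb2
  have hb3 := shift p3 p4 0 0 1 hb2
  have h3 : p3 = 0 := step_zero _ p4 0 0 0 C ε hε 1 (by norm_num) hb3
  exact ⟨h0, h1, h2, h3⟩

/-- Uniqueness of the fourth-order quadratic global indicator (Lemma 2.1(1)):
a symmetric quadratic form in `f(x-h), f(x), f(x+h)` that is `O(h⁴)` for every
smooth `f` with `f'(x) ≠ 0` must be a multiple of the squared second
difference. -/
theorem tau_fourth_order_unique
    (a : Fin 3 → Fin 3 → ℝ) (hsymm : ∀ i j, a i j = a j i) (x : ℝ)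
    (hbig : ∀ f : ℝ → ℝ, ContDiff ℝ (⊤ : ℕ∞) f → deriv f x ≠ 0 →
      ∃ C > 0, ∃ ε > 0, ∀ h : ℝ, 0 < h → h < ε →
        |∑ i : Fin 3, ∑ j : Fin 3,
            a i j * f (x + ((i : ℕ) - 1 : ℝ) * h) * f (x + ((j : ℕ) - 1 : ℝ) * h)|
          ≤ C * h ^ 4) :
    ∃ c : ℝ, ∀ f : ℝ → ℝ, ∀ h : ℝ,
      ∑ i : Fin 3, ∑ j : Fin 3,
          a i j * f (x + ((i : ℕ) - 1 : ℝ) * h) * f (x + ((j : ℕ) - 1 : ℝ) * h)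
        = c * (f (x - h) - 2 * f x + f (x + h)) ^ 2 := by
  -- first test function f₁ t = 1 + (t - x)
  have hd1 : HasDerivAt (fun t : ℝ => 1 + (t - x)) 1 x := by
    simpa using ((hasDerivAt_id x).sub_const x).const_add 1
  obtain ⟨C, hC, ε, hε, hb⟩ := hbig (fun t : ℝ => 1 + (t - x))
    (contDiff_const.add (contDiff_id.sub contDiff_const))
    (by rw [hd1.deriv]; norm_num)
  have hb1 : ∀ h : ℝ, 0 < h → h < ε →
      |(a 0 0 + a 0 1 + a 0 2 + a 1 0 + a 1 1 + a 1 2 + a 2 0 + a 2 1 + a 2 2)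
        + (-2*a 0 0 - a 0 1 - a 1 0 + a 1 2 + a 2 1 + 2*a 2 2)*h
        + (a 0 0 - a 0 2 - a 2 0 + a 2 2)*h^2 + 0*h^3 + 0*h^4| ≤ C * h ^ 4 := by
    intro h hp hl
    have H := hb h hp hl
    have e : (∑ i : Fin 3, ∑ j : Fin 3,
        a i j * (fun t : ℝ => 1 + (t - x)) (x + ((i : ℕ) - 1 : ℝ) * h)
          * (fun t : ℝ => 1 + (t - x)) (x + ((j : ℕ) - 1 : ℝ) * h))
        = (a 0 0 + a 0 1 + a 0 2 + a 1 0 + a 1 1 + a 1 2 + a 2 0 + a 2 1 + a 2 2)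
        + (-2*a 0 0 - a 0 1 - a 1 0 + a 1 2 + a 2 1 + 2*a 2 2)*h
        + (a 0 0 - a 0 2 - a 2 0 + a 2 2)*h^2 + 0*h^3 + 0*h^4 := by
      simp [Fin.sum_univ_three]
      ring
    rw [e] at H
    exact H
  obtain ⟨E0, E1, E2, -⟩ := coeff_zero _ _ _ _ _ C ε hε hb1
  -- second test function f₂ t = 1 + (t - x) + (t - x)^2
  have hds : HasDerivAt (fun t : ℝ => t - x) 1 x := (hasDerivAt_id x).sub_const x
  have hd2 : HasDerivAt (fun t : ℝ => 1 + (t - x) + (t - x)^2) 1 x := by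
    have := (hds.const_add 1).fun_add (hds.fun_pow' 2)
    simpa [Finset.sum_range_succ] using this
  obtain ⟨C', hC', ε', hε', hb'⟩ := hbig (fun t : ℝ => 1 + (t - x) + (t - x)^2)
    ((contDiff_const.add (contDiff_id.sub contDiff_const)).add
      ((contDiff_id.sub contDiff_const).pow 2))
    (by rw [hd2.deriv]; norm_num)
  have hb2 : ∀ h : ℝ, 0 < h → h < ε' →
      |(a 0 0 + a 0 1 + a 0 2 + a 1 0 + a 1 1 + a 1 2 + a 2 0 + a 2 1 + a 2 2)
        + (-2*a 0 0 - a 0 1 - a 1 0 + a 1 2 + a 2 1 + 2*a 2 2)*h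
        + (3*a 0 0 + a 0 1 + a 0 2 + a 1 0 + a 1 2 + a 2 0 + a 2 1 + 3*a 2 2)*h^2
        + (-2*a 0 0 + 2*a 2 2)*h^3
        + (a 0 0 + a 0 2 + a 2 0 + a 2 2)*h^4| ≤ C' * h ^ 4 := by
    intro h hp hl
    have H := hb' h hp hl
    have e : (∑ i : Fin 3, ∑ j : Fin 3,
        a i j * (fun t : ℝ => 1 + (t - x) + (t - x)^2) (x + ((i : ℕ) - 1 : ℝ) * h)
          * (fun t : ℝ => 1 + (t - x) + (t - x)^2) (x + ((j : ℕ) - 1 : ℝ) * h))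
        = (a 0 0 + a 0 1 + a 0 2 + a 1 0 + a 1 1 + a 1 2 + a 2 0 + a 2 1 + a 2 2)
        + (-2*a 0 0 - a 0 1 - a 1 0 + a 1 2 + a 2 1 + 2*a 2 2)*h
        + (3*a 0 0 + a 0 1 + a 0 2 + a 1 0 + a 1 2 + a 2 0 + a 2 1 + 3*a 2 2)*h^2
        + (-2*a 0 0 + 2*a 2 2)*h^3
        + (a 0 0 + a 0 2 + a 2 0 + a 2 2)*h^4 := by
      simp [Fin.sum_univ_three]
      ring
    rw [e] at H
    exact H
  obtain ⟨-, -, F2, F3⟩ := coeff_zero _ _ _ _ _ C' ε' hε' hb2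
  -- solve the linear system
  have s01 := hsymm 0 1
  have s02 := hsymm 0 2
  have s12 := hsymm 1 2
  refine ⟨a 0 0, ?_⟩
  have q22 : a 2 2 = a 0 0 := by linarith
  have q02 : a 0 2 = a 0 0 := by linarith
  have q20 : a 2 0 = a 0 0 := by linarith
  have q01 : a 0 1 = -2 * a 0 0 := by linarith
  have q10 : a 1 0 = -2 * a 0 0 := by linarith
  have q12 : a 1 2 = -2 * a 0 0 := by linarith
  have q21 : a 2 1 = -2 * a 0 0 := by linarith
  have q11 : a 1 1 = 4 * a 0 0 := by linarith
  intro f h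
  have e0 : x + (((0 : Fin 3) : ℕ) - 1 : ℝ) * h = x - h := by norm_num [sub_eq_add_neg]
  have e1 : x + (((1 : Fin 3) : ℕ) - 1 : ℝ) * h = x := by norm_num
  have e2 : x + (((2 : Fin 3) : ℕ) - 1 : ℝ) * h = x + h := by norm_num
  simp only [Fin.sum_univ_three, e0, e1, e2, q22, q02, q20, q01, q10, q12, q21, q11]
  ring
end

section
/- Nonexistence of a fifth-order three-point quadratic indicator at a first-order critical point (Lemma 2.1(2)): With τ(f) as in the previous lemma (a quadratic form in f(x−h), f(x), f(x+h) with h-independent symmetric coefficients), there is no nonzero coefficient matrix [a_{ij}] such that for every smooth f having a first-order critical point at x_c = x + λ·h (i.e., f′(x_c) = 0, f″(x_c) ≠ 0, f‴(x_c) ≠ 0) and for every λ ∈ (−1,1), one has τ(f) = O(h⁵) as h → 0. -/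
def Qc (a : Fin 3 → Fin 3 → ℝ) (l : ℝ) : ℝ :=
  ∑ i : Fin 3, ∑ j : Fin 3, a i j * (((i:ℕ):ℝ) - 1 - l)^2 * (((j:ℕ):ℝ) - 1 - l)^2
def S5c (a : Fin 3 → Fin 3 → ℝ) (l : ℝ) : ℝ :=
  ∑ i : Fin 3, ∑ j : Fin 3, a i j * ((((i:ℕ):ℝ) - 1 - l)^2 * (((j:ℕ):ℝ) - 1 - l)^3
    + (((i:ℕ):ℝ) - 1 - l)^3 * (((j:ℕ):ℝ) - 1 - l)^2)
def S6c (a : Fin 3 → Fin 3 → ℝ) (l : ℝ) : ℝ :=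
  ∑ i : Fin 3, ∑ j : Fin 3, a i j * (((i:ℕ):ℝ) - 1 - l)^3 * (((j:ℕ):ℝ) - 1 - l)^3
def S0c (a : Fin 3 → Fin 3 → ℝ) : ℝ := ∑ i : Fin 3, ∑ j : Fin 3, a i j
def S2c (a : Fin 3 → Fin 3 → ℝ) (l : ℝ) : ℝ :=
  ∑ i : Fin 3, ∑ j : Fin 3, a i j * ((((i:ℕ):ℝ) - 1 - l)^2 + (((j:ℕ):ℝ) - 1 - l)^2)
def S3c (a : Fin 3 → Fin 3 → ℝ) (l : ℝ) : ℝ :=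
  ∑ i : Fin 3, ∑ j : Fin 3, a i j * ((((i:ℕ):ℝ) - 1 - l)^3 + (((j:ℕ):ℝ) - 1 - l)^3)

lemma tau1_eq (a : Fin 3 → Fin 3 → ℝ) (l h : ℝ) :
    (∑ i : Fin 3, ∑ j : Fin 3,
        a i j * (((0:ℝ) - l * h + ((i : ℕ) - 1 : ℝ) * h)^2 + ((0:ℝ) - l * h + ((i : ℕ) - 1 : ℝ) * h)^3)
          * (((0:ℝ) - l * h + ((j : ℕ) - 1 : ℝ) * h)^2 + ((0:ℝ) - l * h + ((j : ℕ) - 1 : ℝ) * h)^3))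
    = h^4 * (Qc a l + S5c a l * h + S6c a l * h^2) := by
  simp only [Qc, S5c, S6c, Fin.sum_univ_three]
  norm_num
  ring

lemma tau2_eq (a : Fin 3 → Fin 3 → ℝ) (l h : ℝ) :
    (∑ i : Fin 3, ∑ j : Fin 3,
        a i j * (1 + ((0:ℝ) - l * h + ((i : ℕ) - 1 : ℝ) * h)^2 + ((0:ℝ) - l * h + ((i : ℕ) - 1 : ℝ) * h)^3)
          * (1 + ((0:ℝ) - l * h + ((j : ℕ) - 1 : ℝ) * h)^2 + ((0:ℝ) - l * h + ((j : ℕ) - 1 : ℝ) * h)^3))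
    = S0c a + S2c a l * h^2 + S3c a l * h^3 + Qc a l * h^4 + S5c a l * h^5 + S6c a l * h^6 := by
  simp only [Qc, S5c, S6c, S0c, S2c, S3c, Fin.sum_univ_three]
  norm_num
  ring


lemma bound_zero (u K ε : ℝ) (hε : 0 < ε)
    (h : ∀ x : ℝ, 0 < x → x < ε → |u| ≤ K * x) : u = 0 := by
  by_contra hu
  have hu' : 0 < |u| := abs_pos.mpr hu
  have hK : 0 < K := by
    have h1 := h (ε/2) (by positivity) (by linarith)
    nlinarith
  set x := min (ε/2) (|u|/(2*K)) with hx
  have hx1 : 0 < x := lt_min (by positivity) (by positivity)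
  have hx2 : x < ε := lt_of_le_of_lt (min_le_left _ _) (by linarith)
  have h2 := h x hx1 hx2
  have h3 : K * x ≤ K * (|u|/(2*K)) :=
    mul_le_mul_of_nonneg_left (min_le_right _ _) hK.le
  have h4 : K * (|u|/(2*K)) = |u|/2 := by field_simp
  linarith

lemma coeff_zero_s10 (u c1 c2 c3 c4 c5 c6 C ε : ℝ) (hε : 0 < ε)
    (hb : ∀ h : ℝ, 0 < h → h < ε →
      |u + c1*h + c2*h^2 + c3*h^3 + c4*h^4 + c5*h^5 + c6*h^6| ≤ C * h) : u = 0 := by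
  apply bound_zero u (|C| + |c1| + |c2| + |c3| + |c4| + |c5| + |c6|) (min ε 1) (by positivity)
  intro x hx hx'
  have h1 : x < ε := lt_of_lt_of_le hx' (min_le_left _ _)
  have h2 : x ≤ 1 := le_of_lt (lt_of_lt_of_le hx' (min_le_right _ _))
  have hb' := hb x hx h1
  have p2 : x^2 ≤ x := by nlinarith
  have p3 : x^3 ≤ x := by nlinarith
  have p4 : x^4 ≤ x := by nlinarith
  have p5 : x^5 ≤ x := by nlinarith
  have p6 : x^6 ≤ x := by nlinarith
  set S := c1*x + c2*x^2 + c3*x^3 + c4*x^4 + c5*x^5 + c6*x^6 with hS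
  have e : u + c1*x + c2*x^2 + c3*x^3 + c4*x^4 + c5*x^5 + c6*x^6 = u + S := by rw [hS]; ring
  rw [e] at hb'
  have t1 : |u| ≤ |u + S| + |S| := by
    have := abs_add_le (u + S) (-S)
    simpa using this
  have t2 : |S| ≤ |c1| * x + |c2| * x + |c3| * x + |c4| * x + |c5| * x + |c6| * x := by
    have : |S| ≤ |c1*x| + |c2*x^2| + |c3*x^3| + |c4*x^4| + |c5*x^5| + |c6*x^6| := by
      rw [hS]
      calc |c1*x + c2*x^2 + c3*x^3 + c4*x^4 + c5*x^5 + c6*x^6|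
          ≤ |c1*x + c2*x^2 + c3*x^3 + c4*x^4 + c5*x^5| + |c6*x^6| := abs_add_le _ _
        _ ≤ (|c1*x + c2*x^2 + c3*x^3 + c4*x^4| + |c5*x^5|) + |c6*x^6| := by
              gcongr; exact abs_add_le _ _
        _ ≤ ((|c1*x + c2*x^2 + c3*x^3| + |c4*x^4|) + |c5*x^5|) + |c6*x^6| := by
              gcongr; exact abs_add_le _ _
        _ ≤ (((|c1*x + c2*x^2| + |c3*x^3|) + |c4*x^4|) + |c5*x^5|) + |c6*x^6| := by
              gcongr; exact abs_add_le _ _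
        _ ≤ ((((|c1*x| + |c2*x^2|) + |c3*x^3|) + |c4*x^4|) + |c5*x^5|) + |c6*x^6| := by
              gcongr; exact abs_add_le _ _
        _ = |c1*x| + |c2*x^2| + |c3*x^3| + |c4*x^4| + |c5*x^5| + |c6*x^6| := by ring
    have q1 : |c1*x| = |c1| * x := by rw [abs_mul, abs_of_pos hx]
    have q2 : |c2*x^2| ≤ |c2| * x := by
      rw [abs_mul, abs_of_nonneg (by positivity : (0:ℝ) ≤ x^2)]
      exact mul_le_mul_of_nonneg_left p2 (abs_nonneg _)
    have q3 : |c3*x^3| ≤ |c3| * x := by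
      rw [abs_mul, abs_of_nonneg (by positivity : (0:ℝ) ≤ x^3)]
      exact mul_le_mul_of_nonneg_left p3 (abs_nonneg _)
    have q4 : |c4*x^4| ≤ |c4| * x := by
      rw [abs_mul, abs_of_nonneg (by positivity : (0:ℝ) ≤ x^4)]
      exact mul_le_mul_of_nonneg_left p4 (abs_nonneg _)
    have q5 : |c5*x^5| ≤ |c5| * x := by
      rw [abs_mul, abs_of_nonneg (by positivity : (0:ℝ) ≤ x^5)]
      exact mul_le_mul_of_nonneg_left p5 (abs_nonneg _)
    have q6 : |c6*x^6| ≤ |c6| * x := by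
      rw [abs_mul, abs_of_nonneg (by positivity : (0:ℝ) ≤ x^6)]
      exact mul_le_mul_of_nonneg_left p6 (abs_nonneg _)
    linarith
  have hCx : C * x ≤ |C| * x := mul_le_mul_of_nonneg_right (le_abs_self C) hx.le
  nlinarith [abs_nonneg S]


lemma extractQ (a : Fin 3 → Fin 3 → ℝ) (l C ε : ℝ) (_hC : 0 < C) (hε : 0 < ε)
    (hb : ∀ h : ℝ, 0 < h → h < ε →
      |∑ i : Fin 3, ∑ j : Fin 3,
          a i j * (((0:ℝ) - l * h + ((i : ℕ) - 1 : ℝ) * h)^2 + ((0:ℝ) - l * h + ((i : ℕ) - 1 : ℝ) * h)^3)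
            * (((0:ℝ) - l * h + ((j : ℕ) - 1 : ℝ) * h)^2 + ((0:ℝ) - l * h + ((j : ℕ) - 1 : ℝ) * h)^3)|
        ≤ C * h ^ 5) : Qc a l = 0 := by
  apply coeff_zero_s10 (Qc a l) (S5c a l) (S6c a l) 0 0 0 0 C ε hε
  intro h hp hlt
  have hb' := hb h hp hlt
  rw [tau1_eq a l h] at hb'
  have h4 : (0:ℝ) < h^4 := by positivity
  rw [abs_mul, abs_of_pos h4] at hb'
  have e1 : C * h^5 = h^4 * (C * h) := by ring
  rw [e1] at hb'
  have h5 := le_of_mul_le_mul_left hb' h4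
  have e2 : Qc a l + S5c a l * h + S6c a l * h^2 + 0*h^3 + 0*h^4 + 0*h^5 + 0*h^6
      = Qc a l + S5c a l * h + S6c a l * h^2 := by ring
  rw [e2]
  exact h5

lemma extractS (a : Fin 3 → Fin 3 → ℝ) (l C ε : ℝ) (hC : 0 < C) (hε : 0 < ε)
    (hb : ∀ h : ℝ, 0 < h → h < ε →
      |∑ i : Fin 3, ∑ j : Fin 3,
          a i j * (1 + ((0:ℝ) - l * h + ((i : ℕ) - 1 : ℝ) * h)^2 + ((0:ℝ) - l * h + ((i : ℕ) - 1 : ℝ) * h)^3)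
            * (1 + ((0:ℝ) - l * h + ((j : ℕ) - 1 : ℝ) * h)^2 + ((0:ℝ) - l * h + ((j : ℕ) - 1 : ℝ) * h)^3)|
        ≤ C * h ^ 5) : S0c a = 0 ∧ S2c a l = 0 := by
  have key : ∀ h : ℝ, 0 < h → h < min ε 1 →
      |S0c a + S2c a l * h^2 + S3c a l * h^3 + Qc a l * h^4 + S5c a l * h^5 + S6c a l * h^6|
        ≤ C * h ^ 5 := by
    intro h hp hlt
    have := hb h hp (lt_of_lt_of_le hlt (min_le_left _ _))
    rwa [tau2_eq a l h] at this
  have hS0 : S0c a = 0 := by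
    apply coeff_zero_s10 (S0c a) 0 (S2c a l) (S3c a l) (Qc a l) (S5c a l) (S6c a l) C (min ε 1)
      (by positivity)
    intro h hp hlt
    have h1 : h ≤ 1 := le_of_lt (lt_of_lt_of_le hlt (min_le_right _ _))
    have hk := key h hp hlt
    have hpow : h^5 ≤ h := by
      calc h^5 ≤ h^1 := pow_le_pow_of_le_one hp.le h1 (by norm_num)
        _ = h := pow_one h
    have : C * h^5 ≤ C * h := mul_le_mul_of_nonneg_left hpow hC.le
    have e : S0c a + 0*h + S2c a l * h^2 + S3c a l * h^3 + Qc a l * h^4 + S5c a l * h^5 + S6c a l * h^6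
        = S0c a + S2c a l * h^2 + S3c a l * h^3 + Qc a l * h^4 + S5c a l * h^5 + S6c a l * h^6 := by
      ring
    rw [e]
    linarith
  refine ⟨hS0, ?_⟩
  apply coeff_zero_s10 (S2c a l) (S3c a l) (Qc a l) (S5c a l) (S6c a l) 0 0 C (min ε 1) (by positivity)
  intro h hp hlt
  have h1 : h ≤ 1 := le_of_lt (lt_of_lt_of_le hlt (min_le_right _ _))
  have hk := key h hp hlt
  rw [hS0] at hk
  have h2 : (0:ℝ) < h^2 := by positivity
  have e : (0:ℝ) + S2c a l * h^2 + S3c a l * h^3 + Qc a l * h^4 + S5c a l * h^5 + S6c a l * h^6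
      = h^2 * (S2c a l + S3c a l * h + Qc a l * h^2 + S5c a l * h^3 + S6c a l * h^4) := by ring
  rw [e, abs_mul, abs_of_pos h2] at hk
  have e1 : C * h^5 = h^2 * (C * h^3) := by ring
  rw [e1] at hk
  have h5 := le_of_mul_le_mul_left hk h2
  have hpow : h^3 ≤ h := by
    calc h^3 ≤ h^1 := pow_le_pow_of_le_one hp.le h1 (by norm_num)
      _ = h := pow_one h
  have h6 : C * h^3 ≤ C * h := mul_le_mul_of_nonneg_left hpow hC.le
  have e2 : S2c a l + S3c a l * h + Qc a l * h^2 + S5c a l * h^3 + S6c a l * h^4 + 0*h^5 + 0*h^6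
      = S2c a l + S3c a l * h + Qc a l * h^2 + S5c a l * h^3 + S6c a l * h^4 := by ring
  rw [e2]
  linarith

/-- Nonexistence of a fifth-order three-point quadratic indicator at a
first-order critical point (Lemma 2.1(2)): if the quadratic form is `O(h⁵)` for
every smooth `f` with a first-order critical point at `x_c = x_j + λ·h` and
every `λ ∈ (-1,1)` (so `x_j = x_c - λ·h`), then the coefficient matrix is
zero. -/
theorem no_fifth_order_three_point_tau
    (a : Fin 3 → Fin 3 → ℝ) (hsymm : ∀ i j, a i j = a j i)
    (hbig : ∀ f : ℝ → ℝ, ContDiff ℝ (⊤ : ℕ∞) f → ∀ xc : ℝ,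
      deriv f xc = 0 → iteratedDeriv 2 f xc ≠ 0 → iteratedDeriv 3 f xc ≠ 0 →
      ∀ lam ∈ Set.Ioo (-1 : ℝ) 1,
        ∃ C > 0, ∃ ε > 0, ∀ h : ℝ, 0 < h → h < ε →
          |∑ i : Fin 3, ∑ j : Fin 3,
              a i j * f (xc - lam * h + ((i : ℕ) - 1 : ℝ) * h)
                * f (xc - lam * h + ((j : ℕ) - 1 : ℝ) * h)|
            ≤ C * h ^ 5) :
    ∀ i j, a i j = 0 := by
  -- derivative facts for f1 = x² + x³
  have hdf1 : deriv (fun x : ℝ => x^2 + x^3) = fun x => 2*x + 3*x^2 := by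
    funext x
    rw [HasDerivAt.deriv (f := fun x : ℝ => x^2 + x^3) ((hasDerivAt_pow 2 x).add (hasDerivAt_pow 3 x))]
    norm_num
  have hdf2 : deriv (fun x : ℝ => 1 + x^2 + x^3) = fun x => 2*x + 3*x^2 := by
    funext x
    rw [HasDerivAt.deriv (f := fun x : ℝ => 1 + x^2 + x^3) (((hasDerivAt_const x (1:ℝ)).add (hasDerivAt_pow 2 x)).add (hasDerivAt_pow 3 x))]
    norm_num
  have hdd : deriv (fun x : ℝ => 2*x + 3*x^2) = fun x => 2 + 6*x := by
    funext x
    have h : HasDerivAt (fun x : ℝ => 2*x + 3*x^2) (2*1 + 3*(↑2 * x^(2-1))) x :=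
      ((hasDerivAt_id x).const_mul 2).add ((hasDerivAt_pow 2 x).const_mul 3)
    rw [h.deriv]; norm_num; ring
  have hddd : deriv (fun x : ℝ => 2 + 6*x) = fun _ => (6:ℝ) := by
    funext x
    have h : HasDerivAt (fun x : ℝ => 2 + 6*x) (0 + 6*1) x :=
      (hasDerivAt_const x (2:ℝ)).add ((hasDerivAt_id x).const_mul 6)
    rw [h.deriv]; norm_num
  have hit2 : ∀ g : ℝ → ℝ, deriv g = (fun x => 2*x + 3*x^2) →
      iteratedDeriv 2 g 0 ≠ 0 ∧ iteratedDeriv 3 g 0 ≠ 0 := by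
    intro g hg
    have e2 : iteratedDeriv 2 g = deriv (deriv g) := by
      rw [iteratedDeriv_succ, iteratedDeriv_one]
    have e3 : iteratedDeriv 3 g = deriv (deriv (deriv g)) := by
      rw [iteratedDeriv_succ, iteratedDeriv_succ, iteratedDeriv_one]
    constructor
    · rw [e2, hg, hdd]; norm_num
    · rw [e3, hg, hdd, hddd]; norm_num
  have hcd1 : ContDiff ℝ (⊤ : ℕ∞) (fun x : ℝ => x^2 + x^3) := by fun_prop
  have hcd2 : ContDiff ℝ (⊤ : ℕ∞) (fun x : ℝ => 1 + x^2 + x^3) := by fun_prop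
  have hd01 : deriv (fun x : ℝ => x^2 + x^3) 0 = 0 := by rw [hdf1]; norm_num
  have hd02 : deriv (fun x : ℝ => 1 + x^2 + x^3) 0 = 0 := by rw [hdf2]; norm_num
  obtain ⟨h21, h31⟩ := hit2 _ hdf1
  obtain ⟨h22, h32⟩ := hit2 _ hdf2
  -- Q(λ) = 0 for our five λ values
  have getQ : ∀ l : ℝ, l ∈ Set.Ioo (-1:ℝ) 1 → Qc a l = 0 := by
    intro l hl
    obtain ⟨C, hC, ε, hε, hb⟩ := hbig (fun x : ℝ => x^2 + x^3) hcd1 0 hd01 h21 h31 l hl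
    exact extractQ a l C ε hC hε hb
  have getS : S0c a = 0 ∧ S2c a 0 = 0 := by
    obtain ⟨C, hC, ε, hε, hb⟩ := hbig (fun x : ℝ => 1 + x^2 + x^3) hcd2 0 hd02 h22 h32 0
      (by constructor <;> norm_num)
    exact extractS a 0 C ε hC hε hb
  have hQ0 := getQ 0 (by constructor <;> norm_num)
  have hQh := getQ (1/2) (by constructor <;> norm_num)
  have hQmh := getQ (-(1/2)) (by constructor <;> norm_num)
  have hQq := getQ (1/4) (by constructor <;> norm_num)
  have hQmq := getQ (-(1/4)) (by constructor <;> norm_num)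
  obtain ⟨hS0, hS2⟩ := getS
  simp only [Qc, S0c, S2c, Fin.sum_univ_three] at hQ0 hQh hQmh hQq hQmq hS0 hS2
  norm_num at hQ0 hQh hQmh hQq hQmq hS0 hS2
  simp only [hsymm 1 0, hsymm 2 0, hsymm 2 1] at hQ0 hQh hQmh hQq hQmq hS0 hS2
  have e00 : a 0 0 = 0 := by linarith
  have e01 : a 0 1 = 0 := by linarith
  have e02 : a 0 2 = 0 := by linarith
  have e11 : a 1 1 = 0 := by linarith
  have e12 : a 1 2 = 0 := by linarith
  have e22 : a 2 2 = 0 := by linarith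
  intro i j
  fin_cases i <;> fin_cases j <;>
    simp only [Fin.isValue] <;>
    first
      | exact e00 | exact e01 | exact e02 | exact e11 | exact e12 | exact e22
      | (rw [hsymm]; first | exact e01 | exact e02 | exact e12)
end

section
/- Taylor expansion of the WENO3 local indicator at a critical point: Let f be smooth with f′(x_c) = 0 where x_c = x_j + λ·h, λ ∈ (−1,1). Then β_0 = (f(x_j) − f(x_j − h))² satisfies β_0 = ¼(2λ+1)²·f″(x_c)²·h⁴ + O(h⁵), and β_1 = (f(x_j + h) − f(x_j))² satisfies β_1 = ¼(2λ−1)²·f″(x_c)²·h⁴ + O(h⁵). In particular, if λ ≠ ∓1/2 and f″(x_c) ≠ 0 then β_0, β_1 are exactly of order h⁴, while at λ = −1/2 (resp. λ = 1/2) the indicator β_0 (resp. β_1) is O(h⁶). -/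
open Set

lemma myIDW {f : ℝ → ℝ} (hf : ContDiff ℝ (⊤ : ℕ∞) f) {s : Set ℝ} (hs : UniqueDiffOn ℝ s)
    {x : ℝ} (hx : x ∈ s) (n : ℕ) :
    iteratedDerivWithin n f s x = iteratedDeriv n f x := by
  have H : HasFTaylorSeriesUpToOn (⊤ : ℕ∞) f (ftaylorSeries ℝ f) s :=
    ((hasFTaylorSeriesUpToOn_univ_iff).mpr (contDiff_iff_ftaylorSeries.mp (hf.of_le (by simp)))).mono
      (subset_univ s)
  have := H.eq_iteratedFDerivWithin_of_uniqueDiffOn (m := n) (by exact_mod_cast le_top) hs hx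
  rw [iteratedDerivWithin_eq_iteratedFDerivWithin, iteratedDeriv_eq_iteratedFDeriv, ← this]
  rfl

lemma quad_taylor {φ : ℝ → ℝ} (hφ : ContDiff ℝ (⊤ : ℕ∞) φ) (h0 : φ 0 = 0) (h1 : deriv φ 0 = 0) :
    ∃ C > 0, ∀ h ∈ Set.Icc (0:ℝ) 1,
      |φ h - iteratedDeriv 2 φ 0 / 2 * h ^ 2| ≤ C * h ^ 3 := by
  obtain ⟨M, hM⟩ : ∃ M, ∀ y ∈ Icc (0:ℝ) 1, |iteratedDeriv 3 φ y| ≤ M := by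
    obtain ⟨M, hM⟩ := (isCompact_Icc (a := (0:ℝ)) (b := 1)).exists_bound_of_continuousOn
      ((hφ.continuous_iteratedDeriv 3 (WithTop.coe_le_coe.mpr le_top)).continuousOn)
    exact ⟨M, fun y hy => by simpa using hM y hy⟩
  have hM0 : 0 ≤ M := le_trans (abs_nonneg _) (hM 0 (by norm_num))
  refine ⟨M / 6 + 1, by positivity, fun h hh => ?_⟩
  rcases eq_or_lt_of_le hh.1 with rfl | hpos
  · simp [h0]
  · have hcd : ContDiffOn ℝ 2 φ (Icc 0 h) := (hφ.of_le (WithTop.coe_le_coe.mpr le_top)).contDiffOn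
    have hud : UniqueDiffOn ℝ (Icc (0:ℝ) h) := uniqueDiffOn_Icc hpos
    have hd2 : Differentiable ℝ (iteratedDeriv 2 φ) := by
      rw [iteratedDeriv_eq_iterate]
      exact (ContDiff.iterate_deriv 2 (hφ.of_le (by simp))).differentiable (by simp)
    have hdiff : DifferentiableOn ℝ (iteratedDerivWithin 2 φ (Icc 0 h)) (Ioo 0 h) :=
      (hd2.differentiableOn).congr fun y hy => myIDW hφ hud (Ioo_subset_Icc_self hy) 2
    obtain ⟨x', hx', hval⟩ := taylor_mean_remainder_lagrange (n := 2) hpos.ne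
      (by rw [uIcc_of_le hpos.le]; exact hcd) (by rw [uIcc_of_le hpos.le, uIoo_of_le hpos.le]; exact hdiff)
    rw [uIcc_of_le hpos.le] at hval; rw [uIoo_of_le hpos.le] at hx'
    have htay : taylorWithinEval φ 2 (Icc 0 h) 0 h = iteratedDeriv 2 φ 0 / 2 * h ^ 2 := by
      rw [taylor_within_apply]
      have e0 := myIDW hφ hud (left_mem_Icc.mpr hpos.le) 0
      have e1 := myIDW hφ hud (left_mem_Icc.mpr hpos.le) 1
      have e2 := myIDW hφ hud (left_mem_Icc.mpr hpos.le) 2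
      simp [Finset.sum_range_succ, e0, e1, e2, iteratedDeriv_one, iteratedDeriv_zero, h0, h1]
      ring
    have e3 := myIDW hφ hud (Ioo_subset_Icc_self hx') 3
    rw [htay] at hval
    rw [hval, e3]
    have h6 : (((2 + 1).factorial : ℕ) : ℝ) = 6 := by norm_num [Nat.factorial]
    rw [abs_div, abs_mul, h6, abs_of_nonneg (by norm_num : (0:ℝ) ≤ 6),
      show h - 0 = h by ring, abs_pow, abs_of_nonneg hpos.le,
      div_le_iff₀ (by norm_num : (0:ℝ) < 6)]
    nlinarith [hM x' ⟨hx'.1.le, hx'.2.le.trans hh.2⟩, pow_pos hpos 3,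
      abs_nonneg (iteratedDeriv 3 φ x')]

lemma weno_pack {φ : ℝ → ℝ} (hφ : ContDiff ℝ (⊤ : ℕ∞) φ) (h0 : φ 0 = 0) (h1 : deriv φ 0 = 0) :
    (∃ C > 0, ∃ ε > 0, ∀ h ∈ Set.Ioo (0:ℝ) ε,
        |φ h ^ 2 - (iteratedDeriv 2 φ 0 / 2) ^ 2 * h ^ 4| ≤ C * h ^ 5) ∧
    (iteratedDeriv 2 φ 0 ≠ 0 →
      ∃ c1 > 0, ∃ c2 > 0, ∃ ε > 0, ∀ h ∈ Set.Ioo (0:ℝ) ε,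
        c1 * h ^ 4 ≤ φ h ^ 2 ∧ φ h ^ 2 ≤ c2 * h ^ 4) ∧
    (iteratedDeriv 2 φ 0 = 0 →
      ∃ C > 0, ∃ ε > 0, ∀ h ∈ Set.Ioo (0:ℝ) ε, φ h ^ 2 ≤ C * h ^ 6) := by
  obtain ⟨C, hC, hb⟩ := quad_taylor hφ h0 h1
  set a : ℝ := iteratedDeriv 2 φ 0 / 2 with ha
  set C1 : ℝ := C * (C + 2 * |a|) + 1 with hC1
  have hC1pos : 0 < C1 := by positivity
  have main : ∀ h ∈ Ioo (0:ℝ) 1, |φ h ^ 2 - a ^ 2 * h ^ 4| ≤ C1 * h ^ 5 := by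
    intro h hh
    have hmem : h ∈ Icc (0:ℝ) 1 := ⟨hh.1.le, hh.2.le⟩
    have hb' := hb h hmem
    have hpos := hh.1
    have h32 : h ^ 3 ≤ h ^ 2 := pow_le_pow_of_le_one hpos.le hh.2.le (by norm_num)
    have hsum : |φ h + a * h ^ 2| ≤ (C + 2 * |a|) * h ^ 2 := by
      have : |φ h + a * h ^ 2| ≤ |φ h - a * h ^ 2| + |2 * a * h ^ 2| := by
        have : φ h + a * h ^ 2 = (φ h - a * h ^ 2) + 2 * a * h ^ 2 := by ring
        rw [this]; exact abs_add_le _ _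
      refine this.trans ?_
      have h2 : |2 * a * h ^ 2| = 2 * |a| * h ^ 2 := by
        rw [abs_mul, abs_mul, abs_of_nonneg (by positivity : (0:ℝ) ≤ h ^ 2)]
        norm_num
      rw [h2]
      have := hb'.trans (mul_le_mul_of_nonneg_left h32 hC.le)
      nlinarith
    have hfac : φ h ^ 2 - a ^ 2 * h ^ 4 = (φ h - a * h ^ 2) * (φ h + a * h ^ 2) := by ring
    rw [hfac, abs_mul]
    calc |φ h - a * h ^ 2| * |φ h + a * h ^ 2| ≤ (C * h ^ 3) * ((C + 2 * |a|) * h ^ 2) :=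
          mul_le_mul hb' hsum (abs_nonneg _) (by positivity)
      _ = C * (C + 2 * |a|) * h ^ 5 := by ring
      _ ≤ C1 * h ^ 5 := by nlinarith [pow_pos hpos 5]
  refine ⟨⟨C1, hC1pos, 1, one_pos, main⟩, ?_, ?_⟩
  · intro hane
    have hA : 0 < a ^ 2 := by
      have : a ≠ 0 := by simp [ha]; intro hz; exact hane (by linarith [hz])
      positivity
    refine ⟨a ^ 2 / 2, by positivity, 2 * a ^ 2, by positivity,
      min 1 (a ^ 2 / (2 * C1)), lt_min one_pos (by positivity), fun h hh => ?_⟩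
    have hh1 : h ∈ Ioo (0:ℝ) 1 := ⟨hh.1, hh.2.trans_le (min_le_left _ _)⟩
    have hb5 := main h hh1
    have hstep : C1 * h ^ 5 ≤ a ^ 2 / 2 * h ^ 4 := by
      have hhle : h ≤ a ^ 2 / (2 * C1) := (hh.2.trans_le (min_le_right _ _)).le
      have heq : C1 * (a ^ 2 / (2 * C1)) = a ^ 2 / 2 := by
        field_simp
      have : C1 * h ≤ a ^ 2 / 2 :=
        (mul_le_mul_of_nonneg_left hhle hC1pos.le).trans heq.le
      calc C1 * h ^ 5 = (C1 * h) * h ^ 4 := by ring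
        _ ≤ a ^ 2 / 2 * h ^ 4 := mul_le_mul_of_nonneg_right this (by positivity)
    have := abs_le.mp (hb5.trans hstep)
    constructor <;> nlinarith [pow_pos hh.1 4]
  · intro haz
    refine ⟨C ^ 2, by positivity, 1, one_pos, fun h hh => ?_⟩
    have hb' := hb h ⟨hh.1.le, hh.2.le⟩
    rw [ha, haz] at hb'
    simp only [zero_div, zero_mul, sub_zero] at hb'
    have : φ h ^ 2 ≤ (C * h ^ 3) ^ 2 := by
      have h2 := abs_le.mp hb'
      exact sq_le_sq' h2.1 h2.2
    calc φ h ^ 2 ≤ (C * h ^ 3) ^ 2 := this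
      _ = C ^ 2 * h ^ 6 := by ring



/-- The Jiang–Shu indicator of the left two-point stencil, with the grid node
`x_j = x_c - λ·h`. -/
def wenoBeta0 (f : ℝ → ℝ) (xc lam h : ℝ) : ℝ :=
  (f (xc - lam * h) - f (xc - lam * h - h)) ^ 2

/-- The Jiang–Shu indicator of the right two-point stencil. -/
def wenoBeta1 (f : ℝ → ℝ) (xc lam h : ℝ) : ℝ :=
  (f (xc - lam * h + h) - f (xc - lam * h)) ^ 2

/-- Taylor expansion of the WENO3 local indicators at a critical point
`x_c = x_j + λ·h`, together with the exact-order and order-increase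
consequences. -/
theorem weno3_local_indicator_expansion
    (f : ℝ → ℝ) (hf : ContDiff ℝ (⊤ : ℕ∞) f) (xc lam : ℝ) (hlam : lam ∈ Set.Ioo (-1 : ℝ) 1)
    (hcrit : deriv f xc = 0) :
    (∃ C > 0, ∃ ε > 0, ∀ h ∈ Set.Ioo (0:ℝ) ε,
      |wenoBeta0 f xc lam h -
          (1 / 4) * (2 * lam + 1) ^ 2 * (iteratedDeriv 2 f xc) ^ 2 * h ^ 4| ≤ C * h ^ 5) ∧
    (∃ C > 0, ∃ ε > 0, ∀ h ∈ Set.Ioo (0:ℝ) ε,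
      |wenoBeta1 f xc lam h -
          (1 / 4) * (2 * lam - 1) ^ 2 * (iteratedDeriv 2 f xc) ^ 2 * h ^ 4| ≤ C * h ^ 5) ∧
    (lam ≠ -(1 / 2) → iteratedDeriv 2 f xc ≠ 0 →
      ∃ c1 > 0, ∃ c2 > 0, ∃ ε > 0, ∀ h ∈ Set.Ioo (0:ℝ) ε,
        c1 * h ^ 4 ≤ wenoBeta0 f xc lam h ∧ wenoBeta0 f xc lam h ≤ c2 * h ^ 4) ∧
    (lam ≠ 1 / 2 → iteratedDeriv 2 f xc ≠ 0 →
      ∃ c1 > 0, ∃ c2 > 0, ∃ ε > 0, ∀ h ∈ Set.Ioo (0:ℝ) ε,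
        c1 * h ^ 4 ≤ wenoBeta1 f xc lam h ∧ wenoBeta1 f xc lam h ≤ c2 * h ^ 4) ∧
    (lam = -(1 / 2) →
      ∃ C > 0, ∃ ε > 0, ∀ h ∈ Set.Ioo (0:ℝ) ε, wenoBeta0 f xc lam h ≤ C * h ^ 6) ∧
    (lam = 1 / 2 →
      ∃ C > 0, ∃ ε > 0, ∀ h ∈ Set.Ioo (0:ℝ) ε, wenoBeta1 f xc lam h ≤ C * h ^ 6) := by
  have hfd : Differentiable ℝ f := hf.differentiable (by simp)
  have hfd2 : Differentiable ℝ (deriv f) :=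
    ((contDiff_infty_iff_deriv.mp (hf.of_le (by simp))).2).differentiable (by simp)
  -- inner affine maps
  have g1 : ∀ x : ℝ, HasDerivAt (fun h : ℝ => xc - lam * h) (-lam) x := by
    intro x; simpa using ((hasDerivAt_id x).const_mul lam).const_sub xc
  have g2 : ∀ x : ℝ, HasDerivAt (fun h : ℝ => xc - lam * h - h) (-lam - 1) x := by
    intro x; exact (g1 x).sub (hasDerivAt_id' x)
  have g3 : ∀ x : ℝ, HasDerivAt (fun h : ℝ => xc - lam * h + h) (-lam + 1) x := by
    intro x; exact (g1 x).add (hasDerivAt_id' x)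
  set φ0 : ℝ → ℝ := fun h => f (xc - lam * h) - f (xc - lam * h - h) with hφ0def
  set φ1 : ℝ → ℝ := fun h => f (xc - lam * h + h) - f (xc - lam * h) with hφ1def
  have hsm1 : ContDiff ℝ (⊤ : ℕ∞) (fun h : ℝ => xc - lam * h) :=
    contDiff_const.sub (contDiff_const.mul contDiff_id)
  have hφ0 : ContDiff ℝ (⊤ : ℕ∞) φ0 :=
    (hf.comp hsm1).sub (hf.comp (hsm1.sub contDiff_id))
  have hφ1 : ContDiff ℝ (⊤ : ℕ∞) φ1 :=
    (hf.comp (hsm1.add contDiff_id)).sub (hf.comp hsm1)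
  have D0 : ∀ x : ℝ, HasDerivAt φ0
      (deriv f (xc - lam * x) * (-lam) - deriv f (xc - lam * x - x) * (-lam - 1)) x := by
    intro x
    exact ((hfd _).hasDerivAt.comp x (g1 x)).sub ((hfd _).hasDerivAt.comp x (g2 x))
  have D1 : ∀ x : ℝ, HasDerivAt φ1
      (deriv f (xc - lam * x + x) * (-lam + 1) - deriv f (xc - lam * x) * (-lam)) x := by
    intro x
    exact ((hfd _).hasDerivAt.comp x (g3 x)).sub ((hfd _).hasDerivAt.comp x (g1 x))
  have hdφ0 : deriv φ0 = fun x =>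
      deriv f (xc - lam * x) * (-lam) - deriv f (xc - lam * x - x) * (-lam - 1) :=
    funext fun x => (D0 x).deriv
  have hdφ1 : deriv φ1 = fun x =>
      deriv f (xc - lam * x + x) * (-lam + 1) - deriv f (xc - lam * x) * (-lam) :=
    funext fun x => (D1 x).deriv
  have hz0 : φ0 0 = 0 := by simp [hφ0def]
  have hz1 : φ1 0 = 0 := by simp [hφ1def]
  have hd0 : deriv φ0 0 = 0 := by
    rw [hdφ0]; simp [hcrit]
  have hd1 : deriv φ1 0 = 0 := by
    rw [hdφ1]; simp [hcrit]
  have hf2xc : iteratedDeriv 2 f xc = deriv (deriv f) xc := by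
    rw [show (2:ℕ) = 1 + 1 from rfl, iteratedDeriv_succ, iteratedDeriv_one]
  have key0 : iteratedDeriv 2 φ0 0 = -(2 * lam + 1) * iteratedDeriv 2 f xc := by
    rw [show (2:ℕ) = 1 + 1 from rfl, iteratedDeriv_succ, iteratedDeriv_one, hdφ0]
    have hψ : HasDerivAt (fun x : ℝ =>
        deriv f (xc - lam * x) * (-lam) - deriv f (xc - lam * x - x) * (-lam - 1))
        ((deriv (deriv f) (xc - lam * 0) * (-lam)) * (-lam)
          - (deriv (deriv f) (xc - lam * 0 - 0) * (-lam - 1)) * (-lam - 1)) 0 :=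
      (((hfd2 _).hasDerivAt.comp 0 (g1 0)).mul_const (-lam)).sub
        (((hfd2 _).hasDerivAt.comp 0 (g2 0)).mul_const (-lam - 1))
    rw [hψ.deriv, hf2xc]
    simp only [mul_zero, sub_zero]
    ring
  have key1 : iteratedDeriv 2 φ1 0 = (1 - 2 * lam) * iteratedDeriv 2 f xc := by
    rw [show (2:ℕ) = 1 + 1 from rfl, iteratedDeriv_succ, iteratedDeriv_one, hdφ1]
    have hψ : HasDerivAt (fun x : ℝ =>
        deriv f (xc - lam * x + x) * (-lam + 1) - deriv f (xc - lam * x) * (-lam))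
        ((deriv (deriv f) (xc - lam * 0 + 0) * (-lam + 1)) * (-lam + 1)
          - (deriv (deriv f) (xc - lam * 0) * (-lam)) * (-lam)) 0 :=
      (((hfd2 _).hasDerivAt.comp 0 (g3 0)).mul_const (-lam + 1)).sub
        (((hfd2 _).hasDerivAt.comp 0 (g1 0)).mul_const (-lam))
    rw [hψ.deriv, hf2xc]
    simp only [mul_zero, sub_zero, add_zero]
    ring
  obtain ⟨P0, Q0, R0⟩ := weno_pack hφ0 hz0 hd0
  obtain ⟨P1, Q1, R1⟩ := weno_pack hφ1 hz1 hd1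
  have hc0 : (iteratedDeriv 2 φ0 0 / 2) ^ 2
      = 1 / 4 * (2 * lam + 1) ^ 2 * iteratedDeriv 2 f xc ^ 2 := by
    rw [key0]; ring
  have hc1 : (iteratedDeriv 2 φ1 0 / 2) ^ 2
      = 1 / 4 * (2 * lam - 1) ^ 2 * iteratedDeriv 2 f xc ^ 2 := by
    rw [key1]; ring
  have hw0 : ∀ h : ℝ, wenoBeta0 f xc lam h = φ0 h ^ 2 := fun h => rfl
  have hw1 : ∀ h : ℝ, wenoBeta1 f xc lam h = φ1 h ^ 2 := fun h => rfl
  refine ⟨?_, ?_, ?_, ?_, ?_, ?_⟩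
  · obtain ⟨C, hC, ε, hε, hP⟩ := P0
    exact ⟨C, hC, ε, hε, fun h hh => by rw [hw0, ← hc0]; exact hP h hh⟩
  · obtain ⟨C, hC, ε, hε, hP⟩ := P1
    exact ⟨C, hC, ε, hε, fun h hh => by rw [hw1, ← hc1]; exact hP h hh⟩
  · intro hne hne2
    have : iteratedDeriv 2 φ0 0 ≠ 0 := by
      rw [key0]
      exact mul_ne_zero (by intro hz; apply hne; linarith [neg_eq_zero.mp hz]) hne2
    obtain ⟨c1, hc1', c2, hc2', ε, hε, hQ⟩ := Q0 this
    exact ⟨c1, hc1', c2, hc2', ε, hε, fun h hh => by rw [hw0]; exact hQ h hh⟩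
  · intro hne hne2
    have : iteratedDeriv 2 φ1 0 ≠ 0 := by
      rw [key1]
      exact mul_ne_zero (by intro hz; apply hne; linarith) hne2
    obtain ⟨c1, hc1', c2, hc2', ε, hε, hQ⟩ := Q1 this
    exact ⟨c1, hc1', c2, hc2', ε, hε, fun h hh => by rw [hw1]; exact hQ h hh⟩
  · intro hl
    have : iteratedDeriv 2 φ0 0 = 0 := by rw [key0, hl]; ring
    obtain ⟨C, hC, ε, hε, hR⟩ := R0 this
    exact ⟨C, hC, ε, hε, fun h hh => by rw [hw0]; exact hR h hh⟩
  · intro hl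
    have : iteratedDeriv 2 φ1 0 = 0 := by rw [key1, hl]; ring
    obtain ⟨C, hC, ε, hε, hR⟩ := R1 this
    exact ⟨C, hC, ε, hε, fun h hh => by rw [hw1]; exact hR h hh⟩
end

section
/- Leading error of the global indicator τ_3 at a critical point: Let f be smooth with f′(x_c) = 0 where x_c = x_j + λ·h, λ ∈ (−1,1), and set τ_3 = |(f(x_j+h) − f(x_j−h))·(f(x_j+h) − 2f(x_j) + f(x_j−h))|. Then τ_3 = |−2λ·f″(x_c)²|·h⁴ + O(h⁵). In particular τ_3 = O(h⁴) in general, and τ_3 = O(h⁵) if and only if the leading coefficient vanishes, i.e., λ = 0 or f″(x_c) = 0. -/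
lemma my_idw_eq {f : ℝ → ℝ} (hf : ContDiff ℝ (⊤ : ℕ∞) f) {s : Set ℝ} (hs : UniqueDiffOn ℝ s)
    (n : ℕ) : ∀ x ∈ s, iteratedDerivWithin n f s x = iteratedDeriv n f x := by
  induction n with
  | zero => intro x hx; simp
  | succ n ih =>
    intro x hx
    rw [iteratedDerivWithin_succ, iteratedDeriv_succ,
        derivWithin_congr (fun y hy => ih y hy) (ih x hx)]
    exact ((hf.differentiable_iteratedDeriv n (by exact_mod_cast ENat.coe_lt_top n)) x).derivWithin (hs x hx)

lemma my_taylor_right {f : ℝ → ℝ} (hf : ContDiff ℝ (⊤ : ℕ∞) f) (xc : ℝ) {M : ℝ}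
    (hM : ∀ y ∈ Set.Icc xc (xc + 1), |iteratedDeriv 3 f y| ≤ M) :
    ∀ u ∈ Set.Icc (0:ℝ) 1,
      |f (xc + u) - f xc - deriv f xc * u - iteratedDeriv 2 f xc / 2 * u ^ 2| ≤ M * u ^ 3 := by
  intro u hu
  have h01 : xc ≤ xc + 1 := by linarith
  have hud : UniqueDiffOn ℝ (Set.Icc xc (xc + 1)) := uniqueDiffOn_Icc (by linarith)
  have hxc : xc ∈ Set.Icc xc (xc + 1) := ⟨le_refl _, h01⟩
  have hxu : xc + u ∈ Set.Icc xc (xc + 1) := ⟨by linarith [hu.1], by linarith [hu.2]⟩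
  have key := taylor_mean_remainder_bound (n := 2) h01
      ((hf.of_le (WithTop.coe_le_coe.mpr le_top) : ContDiff ℝ (3:ℕ) f).contDiffOn) hxu
      (fun y hy => by
        rw [my_idw_eq hf hud 3 y hy, Real.norm_eq_abs]; exact hM y hy)
  rw [taylor_within_apply] at key
  simp only [Finset.sum_range_succ, Finset.sum_range_zero, my_idw_eq hf hud 0 xc hxc,
    my_idw_eq hf hud 1 xc hxc, my_idw_eq hf hud 2 xc hxc, iteratedDeriv_zero,
    iteratedDeriv_one, Real.norm_eq_abs, smul_eq_mul] at key
  norm_num [Nat.factorial] at key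
  have hM0 : 0 ≤ M := le_trans (abs_nonneg _) (hM xc hxc)
  have e : f (xc + u) - f xc - deriv f xc * u - iteratedDeriv 2 f xc / 2 * u ^ 2
      = f (xc + u) - (f xc + u * deriv f xc + 1 / 2 * u ^ 2 * iteratedDeriv 2 f xc) := by ring
  rw [e]
  nlinarith [pow_nonneg hu.1 3]

lemma my_taylor2 {f : ℝ → ℝ} (hf : ContDiff ℝ (⊤ : ℕ∞) f) (xc : ℝ) :
    ∃ C > 0, ∀ u : ℝ, |u| ≤ 1 →
      |f (xc + u) - f xc - deriv f xc * u - iteratedDeriv 2 f xc / 2 * u ^ 2| ≤ C * |u| ^ 3 := by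
  obtain ⟨M, hM⟩ := (isCompact_Icc (a := xc - 1) (b := xc + 1)).exists_bound_of_continuousOn
      ((hf.continuous_iteratedDeriv 3 (WithTop.coe_le_coe.mpr le_top)).continuousOn)
  simp only [Real.norm_eq_abs] at hM
  have hM0 : 0 ≤ M := le_trans (abs_nonneg _) (hM xc ⟨by linarith, by linarith⟩)
  set g : ℝ → ℝ := fun z => f (-(z + -(2 * xc))) with hg
  have hgc : ContDiff ℝ (⊤ : ℕ∞) g := by
    apply hf.comp
    fun_prop
  have hg_iter : ∀ (n : ℕ) (y : ℝ),
      iteratedDeriv n g y = (-1:ℝ)^n * iteratedDeriv n f (2*xc - y) := by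
    intro n y
    have h1 : iteratedDeriv n g y = iteratedDeriv n (fun z => f (-z)) (y + -(2*xc)) :=
      congrFun (iteratedDeriv_comp_add_const n (fun z => f (-z)) (-(2*xc))) y
    rw [h1, iteratedDeriv_comp_neg, smul_eq_mul]
    congr 2
    ring
  have hMf : ∀ y ∈ Set.Icc xc (xc + 1), |iteratedDeriv 3 f y| ≤ M :=
    fun y hy => hM y ⟨by linarith [hy.1], hy.2⟩
  have hRf := my_taylor_right hf xc hMf
  have hMg : ∀ y ∈ Set.Icc xc (xc + 1), |iteratedDeriv 3 g y| ≤ M := by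
    intro y hy
    rw [hg_iter 3 y, abs_mul]
    have h2 : |((-1:ℝ))^3| = 1 := by norm_num
    rw [h2, one_mul]
    exact hM _ ⟨by linarith [hy.2], by linarith [hy.1]⟩
  have hRg := my_taylor_right hgc xc hMg
  refine ⟨M + 1, by positivity, fun u hu => ?_⟩
  rcases le_or_gt 0 u with hu0 | hu0
  · have h1 := hRf u ⟨hu0, by rwa [abs_of_nonneg hu0] at hu⟩
    rw [abs_of_nonneg hu0]
    nlinarith [pow_nonneg hu0 3]
  · have hv : -u ∈ Set.Icc (0:ℝ) 1 := ⟨by linarith, by rwa [abs_of_neg hu0] at hu⟩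
    have h1 := hRg (-u) hv
    have e0 : g (xc + -u) = f (xc + u) := by
      show f _ = f _
      congr 1
      ring
    have e1 : g xc = f xc := by
      show f _ = f _
      congr 1
      ring
    have e2 : deriv g xc = -deriv f xc := by
      rw [← iteratedDeriv_one, hg_iter 1 xc, ← iteratedDeriv_one]
      have : 2 * xc - xc = xc := by ring
      rw [this]
      ring
    have e3 : iteratedDeriv 2 g xc = iteratedDeriv 2 f xc := by
      rw [hg_iter 2 xc]
      have : 2 * xc - xc = xc := by ring
      rw [this]
      ring
    rw [e0, e1, e2, e3] at h1
    have e4 : f (xc + u) - f xc - -deriv f xc * -u - iteratedDeriv 2 f xc / 2 * (-u) ^ 2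
        = f (xc + u) - f xc - deriv f xc * u - iteratedDeriv 2 f xc / 2 * u ^ 2 := by ring
    rw [e4] at h1
    rw [abs_of_neg hu0]
    nlinarith [pow_nonneg (neg_nonneg.mpr hu0.le) 3]

/-- The WENO3-Z global indicator `τ₃` on the stencil `{x_j-h, x_j, x_j+h}`
with `x_j = x_c - λ·h`. -/
def wenoTau3 (f : ℝ → ℝ) (xc lam h : ℝ) : ℝ :=
  |(f (xc - lam * h + h) - f (xc - lam * h - h)) *
    (f (xc - lam * h + h) - 2 * f (xc - lam * h) + f (xc - lam * h - h))|

set_option maxHeartbeats 2000000 in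
/-- Leading error of `τ₃` at a first-order critical point `x_c = x_j + λ·h`:
`τ₃ = |−2λ·f″(x_c)²|·h⁴ + O(h⁵)`; in particular `τ₃ = O(h⁴)`, and
`τ₃ = O(h⁵)` iff `λ = 0` or `f″(x_c) = 0`. -/
theorem weno3_tau3_leading_error
    (f : ℝ → ℝ) (hf : ContDiff ℝ (⊤ : ℕ∞) f) (xc lam : ℝ) (hlam : lam ∈ Set.Ioo (-1 : ℝ) 1)
    (hcrit : deriv f xc = 0) :
    (∃ C > 0, ∃ ε > 0, ∀ h ∈ Set.Ioo (0:ℝ) ε,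
      |wenoTau3 f xc lam h - |(-2) * lam * (iteratedDeriv 2 f xc) ^ 2| * h ^ 4|
        ≤ C * h ^ 5) ∧
    (∃ C > 0, ∃ ε > 0, ∀ h ∈ Set.Ioo (0:ℝ) ε, wenoTau3 f xc lam h ≤ C * h ^ 4) ∧
    ((∃ C > 0, ∃ ε > 0, ∀ h ∈ Set.Ioo (0:ℝ) ε, wenoTau3 f xc lam h ≤ C * h ^ 5) ↔
      (lam = 0 ∨ iteratedDeriv 2 f xc = 0)) := by
  obtain ⟨hl1, hl2⟩ := hlam
  obtain ⟨C₀, hC₀, hT⟩ := my_taylor2 hf xc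
  set f2 := iteratedDeriv 2 f xc with hf2def
  set C₁ : ℝ := 52 * C₀ * |f2| + 288 * C₀ ^ 2 with hC₁def
  have hC₁ : 0 < C₁ := by positivity
  have key : ∀ h ∈ Set.Ioo (0:ℝ) (1/2),
      |wenoTau3 f xc lam h - |(-2) * lam * f2 ^ 2| * h ^ 4| ≤ C₁ * h ^ 5 := by
    intro h hh
    obtain ⟨hh0, hh2⟩ := hh
    have est : ∀ c : ℝ, |c| ≤ 2 →
        |f (xc + c * h) - f xc - f2 / 2 * (c * h) ^ 2| ≤ C₀ * |c| ^ 3 * h ^ 3 := by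
      intro c hc
      have h1 : |c * h| ≤ 1 := by
        rw [abs_mul, abs_of_pos hh0]
        nlinarith [abs_nonneg c]
      have h2 := hT (c * h) h1
      rw [hcrit, zero_mul, sub_zero] at h2
      calc |f (xc + c * h) - f xc - f2 / 2 * (c * h) ^ 2| ≤ C₀ * |c * h| ^ 3 := h2
        _ = C₀ * |c| ^ 3 * h ^ 3 := by rw [abs_mul, abs_of_pos hh0, mul_pow]; ring
    have ea := est (1 - lam) (by rw [abs_le]; constructor <;> linarith)
    have eb := est (-(1 + lam)) (by rw [abs_le]; constructor <;> linarith)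
    have el := est (-lam) (by rw [abs_le]; constructor <;> linarith)
    have hba : |1 - lam| ^ 3 ≤ 8 := by
      calc |1 - lam| ^ 3 ≤ 2 ^ 3 :=
            pow_le_pow_left₀ (abs_nonneg _) (abs_le.mpr ⟨by linarith, by linarith⟩) 3
        _ = 8 := by norm_num
    have hbb : |(-(1 + lam))| ^ 3 ≤ 8 := by
      calc |(-(1 + lam))| ^ 3 ≤ 2 ^ 3 :=
            pow_le_pow_left₀ (abs_nonneg _) (abs_le.mpr ⟨by linarith, by linarith⟩) 3
        _ = 8 := by norm_num
    have hbl : |(-lam)| ^ 3 ≤ 1 := by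
      calc |(-lam)| ^ 3 ≤ 1 ^ 3 :=
            pow_le_pow_left₀ (abs_nonneg _) (abs_le.mpr ⟨by linarith, by linarith⟩) 3
        _ = 1 := by norm_num
    have hh3 : (0:ℝ) ≤ h ^ 3 := pow_nonneg hh0.le 3
    have ea' : |f (xc + (1 - lam) * h) - f xc - f2 / 2 * ((1 - lam) * h) ^ 2|
        ≤ 8 * C₀ * h ^ 3 :=
      ea.trans (by nlinarith [mul_le_mul_of_nonneg_right (mul_le_mul_of_nonneg_left hba hC₀.le) hh3])
    have eb' : |f (xc + (-(1 + lam)) * h) - f xc - f2 / 2 * ((-(1 + lam)) * h) ^ 2|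
        ≤ 8 * C₀ * h ^ 3 :=
      eb.trans (by nlinarith [mul_le_mul_of_nonneg_right (mul_le_mul_of_nonneg_left hbb hC₀.le) hh3])
    have el' : |f (xc + (-lam) * h) - f xc - f2 / 2 * ((-lam) * h) ^ 2|
        ≤ C₀ * h ^ 3 :=
      el.trans (by nlinarith [mul_le_mul_of_nonneg_right (mul_le_mul_of_nonneg_left hbl hC₀.le) hh3])
    set D1 := f (xc + (1 - lam) * h) - f (xc + (-(1 + lam)) * h) with hD1
    set D2 := f (xc + (1 - lam) * h) - 2 * f (xc + (-lam) * h) + f (xc + (-(1 + lam)) * h)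
      with hD2
    have hE1 : |D1 - (-2 * lam * f2) * h ^ 2| ≤ 16 * C₀ * h ^ 3 := by
      have e : D1 - (-2 * lam * f2) * h ^ 2
          = (f (xc + (1 - lam) * h) - f xc - f2 / 2 * ((1 - lam) * h) ^ 2)
            - (f (xc + (-(1 + lam)) * h) - f xc - f2 / 2 * ((-(1 + lam)) * h) ^ 2) := by
        rw [hD1]; ring
      rw [e]
      calc |_ - _| ≤ _ + _ := abs_sub _ _
        _ ≤ 16 * C₀ * h ^ 3 := by linarith
    have hE2 : |D2 - f2 * h ^ 2| ≤ 18 * C₀ * h ^ 3 := by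
      have e : D2 - f2 * h ^ 2
          = ((f (xc + (1 - lam) * h) - f xc - f2 / 2 * ((1 - lam) * h) ^ 2)
            + (f (xc + (-(1 + lam)) * h) - f xc - f2 / 2 * ((-(1 + lam)) * h) ^ 2))
            - 2 * (f (xc + (-lam) * h) - f xc - f2 / 2 * ((-lam) * h) ^ 2) := by
        rw [hD2]; ring
      rw [e]
      calc |_ - _| ≤ _ + _ := abs_sub _ _
        _ ≤ (8 * C₀ * h ^ 3 + 8 * C₀ * h ^ 3) + 2 * (C₀ * h ^ 3) := by
          have t1 := abs_add_le (f (xc + (1 - lam) * h) - f xc - f2 / 2 * ((1 - lam) * h) ^ 2)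
            (f (xc + (-(1 + lam)) * h) - f xc - f2 / 2 * ((-(1 + lam)) * h) ^ 2)
          have t2 : |2 * (f (xc + (-lam) * h) - f xc - f2 / 2 * ((-lam) * h) ^ 2)|
              = 2 * |f (xc + (-lam) * h) - f xc - f2 / 2 * ((-lam) * h) ^ 2| := by
            rw [abs_mul]; norm_num
          rw [t2]
          gcongr
          linarith
        _ = 18 * C₀ * h ^ 3 := by ring
    have hprod : |D1 * D2 - ((-2) * lam * f2 ^ 2) * h ^ 4| ≤ C₁ * h ^ 5 := by
      have expand : D1 * D2 - ((-2) * lam * f2 ^ 2) * h ^ 4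
          = ((-2 * lam * f2) * h ^ 2) * (D2 - f2 * h ^ 2)
            + (D1 - (-2 * lam * f2) * h ^ 2) * (f2 * h ^ 2)
            + (D1 - (-2 * lam * f2) * h ^ 2) * (D2 - f2 * h ^ 2) := by ring
      have hl : |lam| ≤ 1 := abs_le.mpr ⟨hl1.le, hl2.le⟩
      have b1 : |(-2 * lam * f2) * h ^ 2| ≤ 2 * |f2| * h ^ 2 := by
        rw [abs_mul, abs_of_nonneg (pow_nonneg hh0.le 2), abs_mul, abs_mul]
        have h2 : |(-2:ℝ)| = 2 := by norm_num
        rw [h2]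
        nlinarith [mul_le_mul_of_nonneg_right (mul_le_mul_of_nonneg_right hl (abs_nonneg f2)) (pow_nonneg hh0.le 2)]
      have bf : |f2 * h ^ 2| = |f2| * h ^ 2 := by
        rw [abs_mul, abs_of_nonneg (pow_nonneg hh0.le 2)]
      have t1 : |((-2 * lam * f2) * h ^ 2) * (D2 - f2 * h ^ 2)|
          ≤ (2 * |f2| * h ^ 2) * (18 * C₀ * h ^ 3) := by
        rw [abs_mul]
        exact mul_le_mul b1 hE2 (abs_nonneg _) (by positivity)
      have t2 : |(D1 - (-2 * lam * f2) * h ^ 2) * (f2 * h ^ 2)|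
          ≤ (16 * C₀ * h ^ 3) * (|f2| * h ^ 2) := by
        rw [abs_mul, bf]
        exact mul_le_mul_of_nonneg_right hE1 (by positivity)
      have t3 : |(D1 - (-2 * lam * f2) * h ^ 2) * (D2 - f2 * h ^ 2)|
          ≤ (16 * C₀ * h ^ 3) * (18 * C₀ * h ^ 3) := by
        rw [abs_mul]
        exact mul_le_mul hE1 hE2 (abs_nonneg _) (by positivity)
      have h65 : h ^ 6 ≤ h ^ 5 := pow_le_pow_of_le_one hh0.le (by linarith) (by norm_num)
      calc |D1 * D2 - ((-2) * lam * f2 ^ 2) * h ^ 4|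
          = |((-2 * lam * f2) * h ^ 2) * (D2 - f2 * h ^ 2)
            + (D1 - (-2 * lam * f2) * h ^ 2) * (f2 * h ^ 2)
            + (D1 - (-2 * lam * f2) * h ^ 2) * (D2 - f2 * h ^ 2)| := by rw [expand]
        _ ≤ |((-2 * lam * f2) * h ^ 2) * (D2 - f2 * h ^ 2)
            + (D1 - (-2 * lam * f2) * h ^ 2) * (f2 * h ^ 2)|
            + |(D1 - (-2 * lam * f2) * h ^ 2) * (D2 - f2 * h ^ 2)| := abs_add_le _ _
        _ ≤ (|((-2 * lam * f2) * h ^ 2) * (D2 - f2 * h ^ 2)|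
            + |(D1 - (-2 * lam * f2) * h ^ 2) * (f2 * h ^ 2)|)
            + |(D1 - (-2 * lam * f2) * h ^ 2) * (D2 - f2 * h ^ 2)| := by
            gcongr; exact abs_add_le _ _
        _ ≤ ((2 * |f2| * h ^ 2) * (18 * C₀ * h ^ 3) + (16 * C₀ * h ^ 3) * (|f2| * h ^ 2))
            + (16 * C₀ * h ^ 3) * (18 * C₀ * h ^ 3) := by linarith
        _ ≤ C₁ * h ^ 5 := by
            rw [hC₁def]
            nlinarith [mul_le_mul_of_nonneg_left h65 (by positivity : (0:ℝ) ≤ 288 * C₀ ^ 2)]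
    have a1 : xc - lam * h + h = xc + (1 - lam) * h := by ring
    have a2 : xc - lam * h - h = xc + (-(1 + lam)) * h := by ring
    have a3 : xc - lam * h = xc + (-lam) * h := by ring
    have hw : wenoTau3 f xc lam h = |D1 * D2| := by
      unfold wenoTau3
      rw [a1, a2, a3]
    rw [hw]
    have hA : |(-2) * lam * f2 ^ 2| * h ^ 4 = |((-2) * lam * f2 ^ 2) * h ^ 4| := by
      rw [abs_mul ((-2) * lam * f2 ^ 2) (h ^ 4), abs_of_nonneg (pow_nonneg hh0.le 4)]
    rw [hA]
    exact le_trans (abs_abs_sub_abs_le_abs_sub _ _) hprod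
  refine ⟨⟨C₁, hC₁, 1/2, by norm_num, key⟩, ?_, ?_⟩
  · refine ⟨|(-2) * lam * f2 ^ 2| + C₁, by positivity, 1/2, by norm_num, fun h hh => ?_⟩
    have hk := key h hh
    obtain ⟨hh0, hh2⟩ := hh
    have h5 : h ^ 5 ≤ h ^ 4 := pow_le_pow_of_le_one hh0.le (by linarith) (by norm_num)
    have h1 := (abs_le.mp hk).2
    have h2 : C₁ * h ^ 5 ≤ C₁ * h ^ 4 := mul_le_mul_of_nonneg_left h5 hC₁.le
    nlinarith [abs_nonneg ((-2) * lam * f2 ^ 2)]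
  · constructor
    · rintro ⟨C, hC, ε, hε, hb⟩
      by_contra hcon
      push_neg at hcon
      obtain ⟨hlam0, hf20⟩ := hcon
      have hAne : ((-2) * lam * f2 ^ 2) ≠ 0 :=
        mul_ne_zero (mul_ne_zero (by norm_num) hlam0) (pow_ne_zero 2 hf20)
      have hApos : (0:ℝ) < |(-2) * lam * f2 ^ 2| := abs_pos.mpr hAne
      set A := |(-2) * lam * f2 ^ 2| with hAdef
      have hCC : (0:ℝ) < C + C₁ := by linarith
      set h0 := min ε (min (1/2) (A / (C + C₁))) / 2 with hh0def
      have hmpos : 0 < min ε (min (1/2) (A / (C + C₁))) :=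
        lt_min hε (lt_min (by norm_num) (div_pos hApos hCC))
      have h0pos : 0 < h0 := by rw [hh0def]; linarith
      have h0ε : h0 < ε := by
        have := min_le_left ε (min (1/2) (A / (C + C₁)))
        rw [hh0def]; linarith
      have h0half : h0 < 1/2 := by
        have h1 := min_le_right ε (min (1/2) (A / (C + C₁)))
        have h2 := min_le_left (1/2 : ℝ) (A / (C + C₁))
        rw [hh0def]; linarith
      have h0A : h0 < A / (C + C₁) := by
        have h1 := min_le_right ε (min (1/2) (A / (C + C₁)))
        have h2 := min_le_right (1/2 : ℝ) (A / (C + C₁))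
        have h3 : 0 < A / (C + C₁) := div_pos hApos hCC
        rw [hh0def]; linarith
      have hk := key h0 ⟨h0pos, h0half⟩
      have hb0 := hb h0 ⟨h0pos, h0ε⟩
      have h1 : A * h0 ^ 4 ≤ (C + C₁) * h0 ^ 5 := by
        have := (abs_le.mp hk).1
        nlinarith
      have h2 : A ≤ (C + C₁) * h0 := by
        have hp : 0 < h0 ^ 4 := pow_pos h0pos 4
        have h3 : A * h0 ^ 4 ≤ ((C + C₁) * h0) * h0 ^ 4 := by nlinarith
        exact le_of_mul_le_mul_right h3 hp
      have h3 : h0 * (C + C₁) < A := (lt_div_iff₀ hCC).mp h0A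
      nlinarith
    · intro h0
      have hA0 : |(-2) * lam * f2 ^ 2| = 0 := by
        rcases h0 with h | h <;> rw [h] <;> simp
      refine ⟨C₁, hC₁, 1/2, by norm_num, fun h hh => ?_⟩
      have hk := key h hh
      rw [hA0, zero_mul, sub_zero] at hk
      have hnn : 0 ≤ wenoTau3 f xc lam h := by unfold wenoTau3; positivity
      rwa [abs_of_nonneg hnn] at hk
end

section
/- Combined accuracy at a critical point for WENO3-Z_{ES4} weights: Let β_0*(h), β_1*(h) be positive functions with β_k* = A·h⁴ + b_k·h⁵ + O(h⁶) for a common constant A > 0 and possibly distinct constants b_0, b_1, and let τ(h) > 0 with τ = O(h⁵). Let d_0, d_1 > 0, d_0 + d_1 = 1, C_α > 0, and define α_k = d_k(1 + C_α·τ/β_k*), ω_k = α_k/(α_0 + α_1). Then ω_k − d_k = O(h²) for k = 0, 1. -/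
/-!
With `x_k = Cα τ / β_k` and `S = d₀ (1 + x₀) + d₁ (1 + x₁)`, the identity `d₀ + d₁ = 1` gives
`ω₀ - d₀ = d₀ d₁ (x₀ - x₁) / S = -(ω₁ - d₁)`. Since `β_k ~ A h⁴` and `τ = O(h⁵)`, each `x_k` is
`O(h)`, so `S → 1`. Because both indicators share the leading term `A h⁴`, `β₁ - β₀ = O(h⁵)`, hence
`x₀ - x₁ = Cα τ (β₁ - β₀) / (β₀ β₁) = O(h⁵ · h⁵ / h⁸) = O(h²)`.
-/

open Asymptotics Filter Topology Set

theorem isBigO_pow_nhdsGT_zero_iff {E : Type*} [SeminormedAddCommGroup E] {f : ℝ → E} {n : ℕ} :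
    f =O[𝓝[>] 0] (· ^ n) ↔ ∃ K > 0, ∃ ε > 0, ∀ h ∈ Ioo 0 ε, ‖f h‖ ≤ K * h ^ n := by
  constructor
  · intro hf
    obtain ⟨K, hK, hfK⟩ := hf.exists_pos
    obtain ⟨ε, hε, hsub⟩ := mem_nhdsGT_iff_exists_Ioo_subset.1 hfK.bound
    refine ⟨K, hK, ε, hε, fun h hh => ?_⟩
    simpa [abs_of_pos hh.1] using hsub hh
  · rintro ⟨K, -, ε, hε, hbound⟩
    refine .of_bound K (eventually_of_mem (Ioo_mem_nhdsGT hε) fun h hh => ?_)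
    simpa [abs_of_pos hh.1] using hbound h hh

theorem normalized_weight_sub_eq {d0 d1 x y : ℝ} (hsum : d0 + d1 = 1)
    (hS : d0 * (1 + x) + d1 * (1 + y) ≠ 0) :
    d0 * (1 + x) / (d0 * (1 + x) + d1 * (1 + y)) - d0
        = d0 * d1 * (x - y) / (d0 * (1 + x) + d1 * (1 + y)) ∧
      d1 * (1 + y) / (d0 * (1 + x) + d1 * (1 + y)) - d1
        = -(d0 * d1 * (x - y) / (d0 * (1 + x) + d1 * (1 + y))) := by
  constructor <;> field_simp
  · linear_combination -(d0 * (1 + x)) * hsum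
  · linear_combination -(d1 * (1 + y)) * hsum

theorem isBigO_normalized_weight_sub {α : Type*} {l : Filter α} {d0 d1 : ℝ} {x y g : α → ℝ}
    (hsum : d0 + d1 = 1) (hx : Tendsto x l (𝓝 0)) (hy : Tendsto y l (𝓝 0))
    (hxy : (fun t => x t - y t) =O[l] g) :
    (fun t => (d0 * (1 + x t) / (d0 * (1 + x t) + d1 * (1 + y t)) - d0,
      d1 * (1 + y t) / (d0 * (1 + x t) + d1 * (1 + y t)) - d1)) =O[l] g := by
  have hS : Tendsto (fun t => d0 * (1 + x t) + d1 * (1 + y t)) l (𝓝 1) := by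
    simpa [hsum] using ((hx.const_add 1).const_mul d0).add ((hy.const_add 1).const_mul d1)
  have hdev : (fun t => d0 * d1 * (x t - y t) / (d0 * (1 + x t) + d1 * (1 + y t))) =O[l] g := by
    simpa only [div_eq_mul_inv, mul_one] using
      (hxy.const_mul_left (d0 * d1)).mul ((hS.inv₀ one_ne_zero).isBigO_one ℝ)
  refine (hdev.prod_left hdev.neg_left).congr' ?_ .rfl
  filter_upwards [hS.eventually_ne one_ne_zero] with t ht
  rw [(normalized_weight_sub_eq hsum ht).1, (normalized_weight_sub_eq hsum ht).2]

section PowerExpansion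

variable {l : Filter ℝ} {β β0 β1 τ : ℝ → ℝ} {A : ℝ} {m n : ℕ}

theorem isBigO_sub_pow_of_expansion (hl : l ≤ 𝓝 0) {b : ℝ}
    (hβ : (fun h => β h - (A * h ^ n + b * h ^ (n + 1))) =O[l] (· ^ (n + 2))) :
    (fun h => β h - A * h ^ n) =O[l] (· ^ (n + 1)) := by
  have hrem := hβ.trans ((isLittleO_pow_pow (𝕜 := ℝ) (by omega : n + 1 < n + 2)).isBigO.mono hl)
  exact (hrem.add (isBigO_const_mul_self b _ l)).congr_left fun h => by ring

theorem isBigO_pow_of_sub_isBigO_pow (hl : l ≤ 𝓝 0) (hA : A ≠ 0)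
    (hβ : (fun h => β h - A * h ^ n) =O[l] (· ^ (n + 1))) : (· ^ n) =O[l] β := by
  have hequiv : β ~[l] fun h => A * h ^ n :=
    (hβ.trans_isLittleO (((isLittleO_pow_pow (𝕜 := ℝ) n.lt_succ_self).mono hl).trans_isBigO
      (isBigO_self_const_mul hA _ l))).isEquivalent
  exact (isBigO_self_const_mul hA _ l).trans hequiv.symm.isBigO

theorem eventually_ne_zero_of_isBigO_pow (hl : l ≤ 𝓝[≠] 0) (hβ : (· ^ n) =O[l] β) :
    ∀ᶠ h in l, β h ≠ 0 := by
  filter_upwards [hl self_mem_nhdsWithin, hβ.eq_zero_imp] with h hh hβh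
  exact fun hzero => pow_ne_zero n hh (hβh hzero)

theorem isBigO_inv_of_isBigO_pow (hl : l ≤ 𝓝[≠] 0) (hβ : (· ^ n) =O[l] β) :
    (fun h => (β h)⁻¹) =O[l] fun h => (h ^ n)⁻¹ :=
  hβ.inv_rev <| by
    filter_upwards [hl self_mem_nhdsWithin] with h (hh : h ≠ 0) hzero
    exact absurd hzero (pow_ne_zero n hh)

theorem tendsto_const_mul_div_zero (hl : l ≤ 𝓝[≠] 0) (c : ℝ) (hnm : n < m)
    (hτ : τ =O[l] (· ^ m)) (hβ : (· ^ n) =O[l] β) :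
    Tendsto (fun h => c * τ h / β h) l (𝓝 0) := by
  have hbound : (fun h => c * τ h / β h) =O[l] fun h => h ^ (m - n) := by
    refine ((hτ.const_mul_left c).mul (isBigO_inv_of_isBigO_pow hl hβ)).congr' .rfl ?_
    filter_upwards [hl self_mem_nhdsWithin] with h (hh : h ≠ 0)
    exact (pow_sub₀ h hh hnm.le).symm
  refine hbound.trans_tendsto ((tendsto_nhdsWithin_of_tendsto_nhds ?_).mono_left hl)
  simpa [zero_pow (Nat.sub_ne_zero_of_lt hnm)] using
    ((continuous_pow (m - n)).tendsto (0 : ℝ))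

theorem isBigO_div_sub_div_s16 (hl : l ≤ 𝓝[≠] 0) (c : ℝ) (hnm : n ≤ m)
    (hτ : τ =O[l] (· ^ m)) (hβ0 : (· ^ n) =O[l] β0) (hβ1 : (· ^ n) =O[l] β1)
    (hβ : (fun h => β1 h - β0 h) =O[l] (· ^ (n + 1))) :
    (fun h => c * τ h / β0 h - c * τ h / β1 h) =O[l] (· ^ (m - n + 1)) := by
  refine (((hτ.const_mul_left c).mul hβ).mul ((isBigO_inv_of_isBigO_pow hl hβ0).mul
    (isBigO_inv_of_isBigO_pow hl hβ1))).congr' ?_ ?_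
  · filter_upwards [eventually_ne_zero_of_isBigO_pow hl hβ0,
      eventually_ne_zero_of_isBigO_pow hl hβ1] with h h0 h1
    field_simp
  · filter_upwards [hl self_mem_nhdsWithin] with h (hh : h ≠ 0)
    obtain ⟨k, rfl⟩ := Nat.exists_eq_add_of_le hnm
    rw [Nat.add_sub_cancel_left]
    field_simp
    ring

theorem isBigO_weight_sub_of_common_leading_term (hl : l ≤ 𝓝[≠] 0) {d0 d1 c : ℝ}
    (hsum : d0 + d1 = 1) (hA : A ≠ 0) (hnm : n < m) (hτ : τ =O[l] (· ^ m))
    (hβ0 : (fun h => β0 h - A * h ^ n) =O[l] (· ^ (n + 1)))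
    (hβ1 : (fun h => β1 h - A * h ^ n) =O[l] (· ^ (n + 1))) :
    (fun h => (d0 * (1 + c * τ h / β0 h) /
          (d0 * (1 + c * τ h / β0 h) + d1 * (1 + c * τ h / β1 h)) - d0,
        d1 * (1 + c * τ h / β1 h) /
          (d0 * (1 + c * τ h / β0 h) + d1 * (1 + c * τ h / β1 h)) - d1))
      =O[l] (· ^ (m - n + 1)) := by
  have hl0 : l ≤ 𝓝 0 := hl.trans nhdsWithin_le_nhds
  have hlow0 := isBigO_pow_of_sub_isBigO_pow hl0 hA hβ0
  have hlow1 := isBigO_pow_of_sub_isBigO_pow hl0 hA hβ1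
  have hdiff : (fun h => β1 h - β0 h) =O[l] (· ^ (n + 1)) :=
    (hβ1.sub hβ0).congr_left fun h => by ring
  exact isBigO_normalized_weight_sub hsum (tendsto_const_mul_div_zero hl c hnm hτ hlow0)
    (tendsto_const_mul_div_zero hl c hnm hτ hlow1)
    (isBigO_div_sub_div_s16 hl c hnm.le hτ hlow0 hlow1 hdiff)

end PowerExpansion

theorem weno3_ZES4_weight_accuracy_general
    (d0 d1 Cα A b0 b1 : ℝ) (τ β0 β1 : ℝ → ℝ)
    (hsum : d0 + d1 = 1)
    (hA : 0 < A)
    (hτ : ∃ K > 0, ∃ ε > 0, ∀ h ∈ Set.Ioo (0:ℝ) ε, |τ h| ≤ K * h ^ 5)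
    (hβ0 : ∃ K > 0, ∃ ε > 0, ∀ h ∈ Set.Ioo (0:ℝ) ε,
      |β0 h - (A * h ^ 4 + b0 * h ^ 5)| ≤ K * h ^ 6)
    (hβ1 : ∃ K > 0, ∃ ε > 0, ∀ h ∈ Set.Ioo (0:ℝ) ε,
      |β1 h - (A * h ^ 4 + b1 * h ^ 5)| ≤ K * h ^ 6) :
    ∃ K > 0, ∃ ε > 0, ∀ h ∈ Set.Ioo (0:ℝ) ε,
      |d0 * (1 + Cα * τ h / β0 h) /
          (d0 * (1 + Cα * τ h / β0 h) + d1 * (1 + Cα * τ h / β1 h)) - d0| ≤ K * h ^ 2 ∧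
      |d1 * (1 + Cα * τ h / β1 h) /
          (d0 * (1 + Cα * τ h / β0 h) + d1 * (1 + Cα * τ h / β1 h)) - d1| ≤ K * h ^ 2 := by
  have hl : 𝓝[>] (0 : ℝ) ≤ 𝓝[≠] 0 := nhdsWithin_mono 0 fun h hh => ne_of_gt hh
  have hτ' : τ =O[𝓝[>] 0] (· ^ 5) :=
    isBigO_pow_nhdsGT_zero_iff.2 (by simpa only [Real.norm_eq_abs] using hτ)
  have hβ0' := isBigO_sub_pow_of_expansion nhdsWithin_le_nhds
    (isBigO_pow_nhdsGT_zero_iff.2 (by simpa only [Real.norm_eq_abs] using hβ0))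
  have hβ1' := isBigO_sub_pow_of_expansion nhdsWithin_le_nhds
    (isBigO_pow_nhdsGT_zero_iff.2 (by simpa only [Real.norm_eq_abs] using hβ1))
  obtain ⟨K, hK, ε, hε, hbound⟩ := isBigO_pow_nhdsGT_zero_iff.1 <|
    isBigO_weight_sub_of_common_leading_term hl hsum hA.ne' (by norm_num) hτ' hβ0' hβ1'
  exact ⟨K, hK, ε, hε, fun h hh => by
    simpa only [norm_prod_le_iff, Real.norm_eq_abs] using hbound h hh⟩

/-- Combined accuracy at a critical point for the WENO3-Z_ES4 weights
(application of Lemma 3.1 with `p = 1`, `m = 5`, `n1 = 4`, `n2 = 5`):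
the weight deviation is `O(h²)`. -/
theorem weno3_ZES4_weight_accuracy
    (d0 d1 Cα A b0 b1 : ℝ) (τ β0 β1 : ℝ → ℝ)
    (hd0 : 0 < d0) (hd1 : 0 < d1) (hsum : d0 + d1 = 1)
    (hCα : 0 < Cα) (hA : 0 < A)
    (hpos : ∃ ε > 0, ∀ h ∈ Set.Ioo (0:ℝ) ε, 0 < τ h ∧ 0 < β0 h ∧ 0 < β1 h)
    (hτ : ∃ K > 0, ∃ ε > 0, ∀ h ∈ Set.Ioo (0:ℝ) ε, |τ h| ≤ K * h ^ 5)
    (hβ0 : ∃ K > 0, ∃ ε > 0, ∀ h ∈ Set.Ioo (0:ℝ) ε,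
      |β0 h - (A * h ^ 4 + b0 * h ^ 5)| ≤ K * h ^ 6)
    (hβ1 : ∃ K > 0, ∃ ε > 0, ∀ h ∈ Set.Ioo (0:ℝ) ε,
      |β1 h - (A * h ^ 4 + b1 * h ^ 5)| ≤ K * h ^ 6) :
    ∃ K > 0, ∃ ε > 0, ∀ h ∈ Set.Ioo (0:ℝ) ε,
      |d0 * (1 + Cα * τ h / β0 h) /
          (d0 * (1 + Cα * τ h / β0 h) + d1 * (1 + Cα * τ h / β1 h)) - d0| ≤ K * h ^ 2 ∧
      |d1 * (1 + Cα * τ h / β1 h) /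
          (d0 * (1 + Cα * τ h / β0 h) + d1 * (1 + Cα * τ h / β1 h)) - d1| ≤ K * h ^ 2 :=
  weno3_ZES4_weight_accuracy_general d0 d1 Cα A b0 b1 τ β0 β1 hsum hA hτ hβ0 hβ1
end
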